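/- arXiv:1906.00899 — 7 statements merged into one kernel-verified Lean document; each statement's English description precedes it below -/
import Mathlib

section
/- Let S = ⊕_{n∈ℤ} S_n be a ℤ-graded ring equipped with ring homomorphisms σ, τ : S → S_0 forming a frame (i.e., τ restricted to S_0 is the identity, τ restricted to S_{-n} is bijective for all n ≥ 1, σ on S_0 induces the p-power Frobenius modulo p, σ(t) = p for the unique element t ∈ S_{-1} with τ(t) = 1, and p lies in the Jacobson radical of S_0). Then the ideal tS_1 of S_0 is contained in the Jacobson radical of S_0. -/
/-- A frame structure (in the sense of Lau / Daniels) on a `ℤ`-graded commutative ring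
`S = ⊕ₙ Sₙ` (internally graded via `𝒜 : ℤ → AddSubgroup S`): ring homomorphisms
`σ, τ : S → S₀` (valued in the degree-zero part) such that `τ` is the identity on `S₀`
and bijective `S₋ₙ → S₀` for `n ≥ 1`, `σ` induces the `p`-power Frobenius on `S₀/pS₀`,
`σ t = p` for the unique `t ∈ S₋₁` with `τ t = 1`, and `p` lies in the Jacobson radical
of `S₀` (expressed by the unit criterion `∀ y ∈ S₀, p·y + 1 ∈ S₀ˣ`). -/
structure Frame (p : ℕ) (S : Type*) [CommRing S] (𝒜 : ℤ → AddSubgroup S)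
    [GradedRing 𝒜] where
  σ : S →+* S
  τ : S →+* S
  σ_mem : ∀ s : S, σ s ∈ 𝒜 0
  τ_mem : ∀ s : S, τ s ∈ 𝒜 0
  τ_id : ∀ s ∈ 𝒜 0, τ s = s
  τ_bij : ∀ n : ℕ, 1 ≤ n → Set.BijOn τ (𝒜 (-(n : ℤ)) : Set S) ((𝒜 0 : AddSubgroup S) : Set S)
  t : S
  t_mem : t ∈ 𝒜 (-1)
  τ_t : τ t = 1
  t_unique : ∀ t' ∈ 𝒜 (-1), τ t' = 1 → t' = t
  σ_frob : ∀ s ∈ 𝒜 0, σ s - s ^ p ∈ Ideal.span ({(p : S)} : Set S)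
  σ_t : σ t = (p : S)
  p_rad : ∀ y ∈ 𝒜 0, ∃ z ∈ 𝒜 0, ((p : S) * y + 1) * z = 1

/-- For a frame `(S, σ, τ)`, the ideal `t·S₁` of `S₀` is contained in the
Jacobson radical of `S₀`; equivalently (by `mem_jacobson_bot`), every generator `t·s`
with `s ∈ S₁` satisfies: `t·s·y + 1` is a unit of `S₀` for all `y ∈ S₀`. -/
theorem stmt_0 (p : ℕ) [Fact p.Prime] (S : Type*) [CommRing S]
    (𝒜 : ℤ → AddSubgroup S) [GradedRing 𝒜] (F : Frame p S 𝒜) :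
    ∀ s ∈ 𝒜 1, ∀ y ∈ 𝒜 0, ∃ z ∈ 𝒜 0, (F.t * s * y + 1) * z = 1 := by

  intro s hs y hy
  have h0mul : ∀ {u v : S}, u ∈ 𝒜 0 → v ∈ 𝒜 0 → u * v ∈ 𝒜 0 := fun hu hv => by
    simpa using SetLike.mul_mem_graded hu hv
  have h0pow : ∀ {u : S} (n : ℕ), u ∈ 𝒜 0 → u ^ n ∈ 𝒜 0 := fun n hu => by
    simpa using SetLike.pow_mem_graded n hu
  set a := F.t * s with ha_def
  have ha : a ∈ 𝒜 0 := by simpa using SetLike.mul_mem_graded F.t_mem hs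
  -- a ^ p = p * c for some c
  obtain ⟨e, he⟩ := Ideal.mem_span_singleton'.mp (F.σ_frob a ha)
  have hσa : F.σ a = (p : S) * F.σ s := by
    rw [ha_def, map_mul, F.σ_t]
  set c : S := F.σ s - e with hc_def
  have hcc : a ^ p = (p : S) * c := by
    rw [hc_def]; linear_combination he + hσa
  set c0 : S := GradedRing.proj 𝒜 0 c with hc0_def
  have hc0mem : c0 ∈ 𝒜 0 := by
    rw [hc0_def, GradedRing.proj_apply]; exact SetLike.coe_mem _
  have hap : a ^ p = (p : S) * c0 := by
    have h1 : GradedRing.proj 𝒜 0 (a ^ p) = a ^ p := by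
      rw [GradedRing.proj_apply, DirectSum.decompose_of_mem_same 𝒜 (h0pow p ha)]
    have h2 : GradedRing.proj 𝒜 0 ((p : S) * c) = (p : S) * c0 := by
      rw [show (p : S) * c = p • c by rw [nsmul_eq_mul], map_nsmul, nsmul_eq_mul, hc0_def]
    rw [← h1, hcc, h2]
  set x : S := a * y with hx_def
  have hx : x ∈ 𝒜 0 := h0mul ha hy
  set w : S := ∑ i ∈ Finset.range p, (-x) ^ i with hw_def
  have hwmem : w ∈ 𝒜 0 := by
    rw [hw_def]
    exact AddSubgroup.sum_mem _ fun i _ => h0pow i ((𝒜 0).neg_mem hx)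
  have hgeom : (x + 1) * w = 1 - (-x) ^ p := by
    have := geom_sum_mul (-x) p
    rw [hw_def]; linear_combination -this
  set y' : S := -((-1 : S) ^ p * (c0 * y ^ p)) with hy'_def
  have hy'mem : y' ∈ 𝒜 0 := by
    rw [hy'_def]
    exact (𝒜 0).neg_mem (h0mul (h0pow p ((𝒜 0).neg_mem (SetLike.one_mem_graded 𝒜)))
      (h0mul hc0mem (h0pow p hy)))
  have hkey : (p : S) * y' + 1 = 1 - (-x) ^ p := by
    have hnp : (-x) ^ p = (-1 : S) ^ p * (a ^ p * y ^ p) := by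
      rw [hx_def, neg_pow, mul_pow]
    rw [hy'_def, hnp]
    linear_combination ((-1 : S) ^ p * y ^ p) * hap
  obtain ⟨z0, hz0mem, hz0⟩ := F.p_rad y' hy'mem
  refine ⟨w * z0, h0mul hwmem hz0mem, ?_⟩
  calc (a * y + 1) * (w * z0) = ((x + 1) * w) * z0 := by rw [hx_def]; ring
    _ = (1 - (-x) ^ p) * z0 := by rw [hgeom]
    _ = ((p : S) * y' + 1) * z0 := by rw [hkey]
    _ = 1 := hz0
end

section
/- Let S = (⊕_n S_n, σ, τ) be a frame. Then τ induces a ring isomorphism S/(t−1)S ≅ S_0, where t ∈ S_{-1} is the unique element with τ(t) = 1. In particular, the kernel of τ : S → S_0 is the ideal generated by t − 1. -/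
namespace Frame

variable {p : ℕ} {S : Type*} [CommRing S] {𝒜 : ℤ → AddSubgroup S} [GradedRing 𝒜]
  (F : Frame p S 𝒜)

lemma t_pow_mem (n : ℕ) : F.t ^ n ∈ 𝒜 (-(n : ℤ)) := by
  simpa using SetLike.pow_mem_graded n F.t_mem

lemma τ_mul_t_pow (x : S) (n : ℕ) : F.τ (x * F.t ^ n) = F.τ x := by
  rw [map_mul, map_pow, F.τ_t, one_pow, mul_one]

lemma τ_of_mem_nonneg {n : ℕ} {x : S} (hx : x ∈ 𝒜 n) : F.τ x = x * F.t ^ n := by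
  have hmem : x * F.t ^ n ∈ 𝒜 0 := by
    simpa using SetLike.mul_mem_graded hx (F.t_pow_mem n)
  rw [← F.τ_mul_t_pow, F.τ_id _ hmem]

lemma eq_τ_mul_t_pow_of_mem_neg {n : ℕ} {x : S} (hx : x ∈ 𝒜 (-(n : ℤ))) :
    x = F.τ x * F.t ^ n := by
  rcases Nat.eq_zero_or_pos n with rfl | hn
  · simp [F.τ_id x (by simpa using hx)]
  have hmem : F.τ x * F.t ^ n ∈ 𝒜 (-(n : ℤ)) := by
    simpa using SetLike.mul_mem_graded (F.τ_mem x) (F.t_pow_mem n)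
  refine (F.τ_bij n hn).injOn hx hmem ?_
  rw [F.τ_mul_t_pow, F.τ_id _ (F.τ_mem x)]

lemma sub_τ_mem_of_mem {i : ℤ} {x : S} (hx : x ∈ 𝒜 i) :
    x - F.τ x ∈ Ideal.span {F.t - 1} := by
  rw [Ideal.mem_span_singleton]
  obtain ⟨n, rfl | rfl⟩ := Int.eq_nat_or_neg i
  · rw [show x - F.τ x = -x * (F.t ^ n - 1) by
      linear_combination -F.τ_of_mem_nonneg hx]
    exact (sub_one_dvd_pow_sub_one F.t n).mul_left _
  · rw [show x - F.τ x = F.τ x * (F.t ^ n - 1) by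
      linear_combination F.eq_τ_mul_t_pow_of_mem_neg hx]
    exact (sub_one_dvd_pow_sub_one F.t n).mul_left _

lemma sub_τ_mem (s : S) : s - F.τ s ∈ Ideal.span {F.t - 1} := by
  induction s using DirectSum.Decomposition.inductionOn 𝒜 with
  | zero => simp
  | homogeneous x => exact F.sub_τ_mem_of_mem x.2
  | add x y hx hy =>
    rw [map_add, add_sub_add_comm]
    exact add_mem hx hy

lemma ker_τ : RingHom.ker F.τ = Ideal.span {F.t - 1} := by
  refine le_antisymm (fun s hs ↦ ?_) ?_
  · simpa [(RingHom.mem_ker).mp hs] using F.sub_τ_mem s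
  · rw [Ideal.span_le, Set.singleton_subset_iff, SetLike.mem_coe, RingHom.mem_ker,
      map_sub, F.τ_t, map_one, sub_self]

lemma range_τ : Set.range F.τ = 𝒜 0 :=
  Set.Subset.antisymm (Set.range_subset_iff.mpr F.τ_mem) fun x hx ↦ ⟨x, F.τ_id x hx⟩

end Frame

theorem stmt_5_general (p : ℕ) (S : Type*) [CommRing S]
    (𝒜 : ℤ → AddSubgroup S) [GradedRing 𝒜] (F : Frame p S 𝒜) :
    RingHom.ker F.τ = Ideal.span ({F.t - 1} : Set S) ∧
    Set.range F.τ = ((𝒜 0 : AddSubgroup S) : Set S) :=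
  ⟨F.ker_τ, F.range_τ⟩

/-- For a frame `(S, σ, τ)`, the homomorphism `τ` induces a ring isomorphism
`S/(t − 1)S ≅ S₀`: its kernel is the ideal generated by `t − 1` and its image is `S₀`. -/
theorem stmt_5 (p : ℕ) [Fact p.Prime] (S : Type*) [CommRing S]
    (𝒜 : ℤ → AddSubgroup S) [GradedRing 𝒜] (F : Frame p S 𝒜) :
    RingHom.ker F.τ = Ideal.span ({F.t - 1} : Set S) ∧
    Set.range F.τ = ((𝒜 0 : AddSubgroup S) : Set S) :=
  stmt_5_general p S 𝒜 F
end

section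
/- Let S be a frame, M a finite projective graded S-module admitting a normal decomposition L = ⊕_i L_i, and let d = d(M) be the depth of M (the minimal i with L̄_i ≠ 0, where M ⊗_{S,ν} R = ⊕_i L̄_i). Then for every n ≤ d, the natural S_0-module map θ_n : M_n → M^τ := M ⊗_{S,τ} S_0 (the composite of the inclusion M_n ↪ M with the base-change map M → M^τ) is an isomorphism of S_0-modules. -/
/-- The degree-zero part `S₀` of a graded ring, as a subring. -/
def gradeZero {S : Type*} [CommRing S] (𝒜 : ℤ → AddSubgroup S) [GradedRing 𝒜] :
    Subring S where
  carrier := 𝒜 0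
  mul_mem' := fun ha hb => by simpa using SetLike.mul_mem_graded ha hb
  one_mem' := SetLike.one_mem_graded 𝒜
  add_mem' := fun ha hb => add_mem ha hb
  zero_mem' := zero_mem _
  neg_mem' := fun ha => neg_mem ha

open DirectSum

theorem eventually_coe_decompose_eq_zero {ι M : Type*} [DecidableEq ι] [AddCommGroup M]
    {ℳ : ι → AddSubgroup M} [Decomposition ℳ] (m : M) :
    ∀ᶠ k in Filter.cofinite, (decompose ℳ m k : M) = 0 := by
  simpa only [Filter.eventually_cofinite, ne_eq, ZeroMemClass.coe_eq_zero] using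
    DFinsupp.finite_support (decompose ℳ m)

section GradedModule

variable {ι S M : Type*} [AddCommGroup ι] [DecidableEq ι] [Ring S] {𝒜 : ι → AddSubgroup S}
  [AddCommGroup M] [Module S M] {ℳ : ι → AddSubgroup M} [Decomposition ℳ]
  [SetLike.GradedSMul 𝒜 ℳ]

theorem coe_decompose_smul_of_left_mem {r : ι} {s : S} (hs : s ∈ 𝒜 r) (k : ι) (m : M) :
    (decompose ℳ (s • m) k : M) = s • (decompose ℳ m (k - r) : M) := by
  induction m using Decomposition.inductionOn ℳ with
  | zero => simp
  | @homogeneous i m =>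
    have hsm : s • (m : M) ∈ ℳ (r + i) := SetLike.GradedSMul.smul_mem hs m.2
    by_cases h : r + i = k
    · subst h
      rw [decompose_of_mem_same ℳ hsm, add_sub_cancel_left, decompose_of_mem_same ℳ m.2]
    · rw [decompose_of_mem_ne ℳ hsm h, decompose_of_mem_ne ℳ m.2 (by rintro rfl; simp at h),
        smul_zero]
  | add x y hx hy =>
    simp only [smul_add, decompose_add, DirectSum.add_apply, AddMemClass.coe_add, hx, hy]

theorem coe_decompose_smul_of_right_mem [GradedRing 𝒜] (s : S) {i : ι} {y : M} (hy : y ∈ ℳ i)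
    (k : ι) :
    (decompose ℳ (s • y) k : M) = (decompose 𝒜 s (k - i) : S) • y := by
  induction s using Decomposition.inductionOn 𝒜 with
  | zero => simp
  | @homogeneous r s =>
    rw [coe_decompose_smul_of_left_mem s.2]
    by_cases h : r = k - i
    · subst h
      rw [decompose_of_mem_same 𝒜 s.2, sub_sub_cancel, decompose_of_mem_same ℳ hy]
    · rw [decompose_of_mem_ne 𝒜 s.2 h, decompose_of_mem_ne ℳ hy (by rintro rfl; simp at h),
        smul_zero, zero_smul]
  | add x y hx hy =>
    simp only [add_smul, decompose_add, DirectSum.add_apply, AddMemClass.coe_add, hx, hy]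

end GradedModule

theorem exists_eq_natCast_mul_of_mem_span {S : Type*} [CommRing S] {𝒜 : ℤ → AddSubgroup S}
    [GradedRing 𝒜] {n : ℕ} {a : gradeZero 𝒜} (h : (a : S) ∈ Ideal.span {(n : S)}) :
    ∃ b : gradeZero 𝒜, a = n * b := by
  obtain ⟨s, hs⟩ := Ideal.mem_span_singleton.mp h
  refine ⟨⟨decompose 𝒜 s 0, SetLike.coe_mem _⟩, Subtype.ext ?_⟩
  rw [Subring.coe_mul, Subring.coe_natCast, ← coe_decompose_mul_of_left_mem_zero 𝒜
    (SetLike.natCast_mem_graded 𝒜 n), ← hs, decompose_of_mem_same 𝒜 a.2]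

namespace Frame

variable {p : ℕ} {S : Type*} [CommRing S] {𝒜 : ℤ → AddSubgroup S} [GradedRing 𝒜]

theorem t_pow_mem_s6 (F : Frame p S 𝒜) (j : ℕ) : F.t ^ j ∈ 𝒜 (-j) := by
  simpa using SetLike.pow_mem_graded j F.t_mem

theorem eq_τ_mul_t_pow (F : Frame p S 𝒜) {j : ℕ} {s : S} (hs : s ∈ 𝒜 (-j)) :
    s = F.τ s * F.t ^ j := by
  rcases j.eq_zero_or_pos with rfl | hj
  · simpa using (F.τ_id s (by simpa using hs)).symm
  · refine (F.τ_bij j hj).injOn hs ?_ ?_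
    · simpa using SetLike.mul_mem_graded (F.τ_mem s) (F.t_pow_mem_s6 j)
    · rw [map_mul, map_pow, F.τ_t, one_pow, mul_one, F.τ_id _ (F.τ_mem s)]

theorem eq_zero_of_t_pow_mul_eq_zero (F : Frame p S 𝒜) {k : ℤ} (hk : k ≤ 0) {a : S}
    (ha : a ∈ 𝒜 k) (m : ℕ) (h : F.t ^ m * a = 0) : a = 0 := by
  obtain ⟨j, rfl⟩ := Int.exists_eq_neg_ofNat hk
  have hτ : F.τ a = 0 := by simpa [F.τ_t] using congr_arg F.τ h
  rw [F.eq_τ_mul_t_pow ha, hτ, zero_mul]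

theorem isUnit_natCast_mul_add_one (F : Frame p S 𝒜) (y : gradeZero 𝒜) :
    IsUnit ((p : gradeZero 𝒜) * y + 1) := by
  obtain ⟨z, hz, hyz⟩ := F.p_rad y y.2
  exact IsUnit.of_mul_eq_one (⟨z, hz⟩ : gradeZero 𝒜) (Subtype.ext (by simpa using hyz))

theorem isUnit_add_one_of_σ_mem_span (F : Frame p S 𝒜) (x : gradeZero 𝒜)
    (hx : F.σ x ∈ Ideal.span {(p : S)}) : IsUnit (x + 1) := by
  have hxp : ((x ^ p : gradeZero 𝒜) : S) ∈ Ideal.span {(p : S)} := by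
    simpa using (Ideal.span {(p : S)}).sub_mem hx (F.σ_frob x x.2)
  obtain ⟨b, hb⟩ := exists_eq_natCast_mul_of_mem_span hxp
  have hgeom : (∑ i ∈ Finset.range p, (-x) ^ i) * (x + 1) = p * (-(-1) ^ p * b) + 1 := by
    linear_combination geom_sum_mul_neg (-x) p - (-1) ^ p * hb - neg_pow x p
  exact isUnit_of_mul_isUnit_right (hgeom ▸ F.isUnit_natCast_mul_add_one _)

theorem mem_jacobson_of_eq_t_pow_mul (F : Frame p S 𝒜) {m : ℕ} (hm : 1 ≤ m) {a : S}
    {c : gradeZero 𝒜} (hc : (c : S) = F.t ^ m * a) : c ∈ Ideal.jacobson ⊥ := by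
  refine Ideal.mem_jacobson_bot.mpr fun y => F.isUnit_add_one_of_σ_mem_span _ ?_
  rw [Subring.coe_mul, hc, map_mul, map_mul, map_pow, F.σ_t, Ideal.mem_span_singleton]
  exact Dvd.dvd.mul_right (Dvd.dvd.mul_right (dvd_pow_self _ (by omega)) _) _

theorem mem_jacobson_of_eq_mul (F : Frame p S 𝒜) {n : ℤ} (hn : n ≠ 0) {u w : S} (hu : u ∈ 𝒜 n)
    (hw : w ∈ 𝒜 (-n)) {c : gradeZero 𝒜} (hc : (c : S) = u * w) : c ∈ Ideal.jacobson ⊥ := by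
  wlog hpos : 0 < n generalizing n u w
  · exact this (neg_ne_zero.mpr hn) hw (by rwa [neg_neg]) (by rw [hc, mul_comm]) (by omega)
  obtain ⟨m, rfl⟩ := Int.eq_ofNat_of_zero_le hpos.le
  have htu : F.t ^ m * u ∈ 𝒜 0 := by
    simpa using SetLike.mul_mem_graded (F.t_pow_mem_s6 m) hu
  have hc' : c = ⟨F.τ w, F.τ_mem w⟩ * ⟨F.t ^ m * u, htu⟩ := by
    ext
    rw [hc, Subring.coe_mul, F.eq_τ_mul_t_pow hw]
    simp only [map_mul, map_pow, F.τ_t, one_pow, mul_one, F.τ_id _ (F.τ_mem w)]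
    ring
  rw [hc']
  exact Ideal.mul_mem_left _ _ (F.mem_jacobson_of_eq_t_pow_mul (by omega) rfl)

end Frame

section QuotientByTSubOne

variable {S M : Type*} [CommRing S] {𝒜 : ℤ → AddSubgroup S} [AddCommGroup M] [Module S M]
  {ℳ : ℤ → AddSubgroup M} [Decomposition ℳ] [SetLike.GradedSMul 𝒜 ℳ] {t : S}

theorem pow_sub_one_smul_mem (t : S) (m : ℕ) (x : M) :
    (t ^ m - 1) • x ∈ (Ideal.span {t - 1} • ⊤ : Submodule S M) :=
  Submodule.smul_mem_smul (Ideal.mem_span_singleton.mpr (sub_one_dvd_pow_sub_one t m)) trivial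

theorem surjective_mk_of_forall_eq_t_pow_smul [GradedRing 𝒜] (ht : t ∈ 𝒜 (-1)) (n : ℤ)
    (hdiv : ∀ m : ℕ, ∀ x ∈ ℳ (n - m), ∃ y ∈ ℳ n, x = t ^ m • y) :
    Function.Surjective fun x : ℳ n =>
      (Submodule.Quotient.mk (x : M) : M ⧸ (Ideal.span {t - 1} • ⊤ : Submodule S M)) := by
  intro q
  obtain ⟨m, rfl⟩ := Submodule.Quotient.mk_surjective _ q
  induction m using Decomposition.inductionOn ℳ with
  | zero => exact ⟨0, rfl⟩
  | @homogeneous k x =>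
    rcases le_total n k with hnk | hkn
    · obtain ⟨m, rfl⟩ := Int.le.dest hnk
      have hx : t ^ m • (x : M) ∈ ℳ n := by
        simpa using SetLike.GradedSMul.smul_mem (SetLike.pow_mem_graded m ht) x.2
      refine ⟨⟨_, hx⟩, (Submodule.Quotient.eq _).mpr ?_⟩
      simpa [sub_smul] using pow_sub_one_smul_mem t m (x : M)
    · obtain ⟨m, rfl⟩ := Int.le.dest hkn
      obtain ⟨y, hy, hxy⟩ := hdiv m x (by rw [add_sub_cancel_right]; exact x.2)
      refine ⟨⟨y, hy⟩, (Submodule.Quotient.eq _).mpr ?_⟩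
      simpa [hxy, sub_smul] using neg_mem (pow_sub_one_smul_mem t m y)
  | add a b ha hb =>
    obtain ⟨xa, hxa⟩ := ha
    obtain ⟨xb, hxb⟩ := hb
    exact ⟨xa + xb, by
      simpa only [AddSubgroup.coe_add, Submodule.Quotient.mk_add] using congr_arg₂ (· + ·) hxa hxb⟩

theorem injective_mk_of_forall_t_pow_smul_eq_zero (ht : t ∈ 𝒜 (-1)) (n : ℤ)
    (hreg : ∀ m : ℕ, ∀ x ∈ ℳ n, t ^ m • x = 0 → x = 0) :
    Function.Injective fun x : ℳ n =>
      (Submodule.Quotient.mk (x : M) : M ⧸ (Ideal.span {t - 1} • ⊤ : Submodule S M)) := by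
  suffices h : ∀ z ∈ ℳ n, ∀ m : M, (t - 1) • m = z → z = 0 by
    intro x y hxy
    obtain ⟨m, -, hm⟩ := (Submodule.mem_smul_pointwise_iff_exists _ _ _).mp
      (Submodule.ideal_span_singleton_smul (t - 1) (⊤ : Submodule S M) ▸
        (Submodule.Quotient.eq _).mp hxy)
    exact Subtype.ext (sub_eq_zero.mp (h _ (sub_mem x.2 y.2) m hm))
  intro z hz m hm
  set f : ℤ → M := fun k => decompose ℳ m k
  have hcomp : ∀ k, (decompose ℳ z k : M) = t • f (k + 1) - f k := by
    intro k
    rw [← hm, sub_smul, one_smul, decompose_sub, DirectSum.sub_apply, AddSubgroup.coe_sub,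
      coe_decompose_smul_of_left_mem ht, sub_neg_eq_add]
  have hrec : ∀ k ≠ n, f k = t • f (k + 1) := by
    intro k hk
    have := hcomp k
    rw [decompose_of_mem_ne ℳ hz hk.symm] at this
    exact (sub_eq_zero.mp this.symm).symm
  have hup : ∀ j : ℕ, ∀ k, n < k → f k = t ^ j • f (k + j) := by
    intro j
    induction j with
    | zero => simp
    | succ j ih =>
      intro k hk
      rw [ih k hk, hrec _ (by omega), smul_smul, ← pow_succ, add_assoc, Nat.cast_succ]
  have hdown : ∀ j : ℕ, f (n - j) = t ^ j • f n := by
    intro j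
    induction j with
    | zero => simp
    | succ j ih =>
      rw [hrec _ (by omega), Nat.cast_succ, sub_add_eq_sub_sub, sub_add_cancel, ih, smul_smul,
        ← pow_succ']
  -- `f` has finite support, so both recursions reach a zero component.
  have hf0 : ∀ᶠ k in Filter.cofinite, f k = 0 := eventually_coe_decompose_eq_zero m
  obtain ⟨j, hj⟩ := (((sub_right_injective (b := n)).comp Nat.cast_injective).tendsto_cofinite
    |>.eventually hf0).exists
  obtain ⟨j', hj'⟩ := (((add_right_injective (n + 1)).comp Nat.cast_injective).tendsto_cofinite
    |>.eventually hf0).exists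
  have hn : f n = 0 := hreg j _ (SetLike.coe_mem _) (by rw [← hdown]; exact hj)
  have hn1 : f (n + 1) = 0 := by
    rw [hup j' _ (lt_add_one n), show f (n + 1 + j') = 0 from hj', smul_zero]
  rw [← decompose_of_mem_same ℳ hz, hcomp, hn, hn1, smul_zero, sub_zero]

end QuotientByTSubOne

theorem eq_zero_of_smul_eq_zero_of_projective {S M : Type*} [CommRing S]
    {𝒜 : ℤ → AddSubgroup S} [GradedRing 𝒜] [AddCommGroup M] [Module S M]
    {ℳ : ℤ → AddSubgroup M} [Decomposition ℳ] [SetLike.GradedSMul 𝒜 ℳ] [Module.Projective S M]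
    {T : Set M} (hT : Submodule.span S T = ⊤) {k : ℤ} (hTdeg : ∀ y ∈ T, ∃ i, k ≤ i ∧ y ∈ ℳ i)
    {s : S} {r : ℤ} (hs : s ∈ 𝒜 r) (hreg : ∀ j ≤ 0, ∀ a ∈ 𝒜 j, s * a = 0 → a = 0)
    {x : M} (hx : x ∈ ℳ k) (hsx : s • x = 0) : x = 0 := by
  choose deg hdeg hmem using fun y : T => hTdeg y y.2
  have hsurj : Function.Surjective (Finsupp.linearCombination S ((↑) : T → M)) := by
    rw [← LinearMap.range_eq_top, Finsupp.range_linearCombination, Subtype.range_coe, hT]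
  obtain ⟨σ, hσ⟩ := Module.projective_lifting_property _ LinearMap.id hsurj
  -- The degree-`k` part of `x = ∑ c y • y` only involves the components of the `c y` in the
  -- nonpositive degrees `k - deg y`, on which `s` acts injectively.
  have hc : ∀ y, (decompose 𝒜 (σ x y) (k - deg y) : S) = 0 := by
    intro y
    refine hreg _ (by linarith [hdeg y]) _ (SetLike.coe_mem _) ?_
    rw [← coe_decompose_mul_add_of_left_mem 𝒜 hs, ← smul_eq_mul, ← Finsupp.smul_apply,
      ← map_smul, hsx, map_zero, Finsupp.zero_apply, decompose_zero, DirectSum.zero_apply,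
      ZeroMemClass.coe_zero]
  calc x = decompose ℳ (Finsupp.linearCombination S (↑) (σ x)) k := by
        rw [← LinearMap.comp_apply, hσ, LinearMap.id_apply, decompose_of_mem_same ℳ hx]
    _ = 0 := by
        simp only [Finsupp.linearCombination_apply, Finsupp.sum, decompose_sum,
          DirectSum.sum_apply, AddSubgroup.val_finsetSum]
        exact Finset.sum_eq_zero fun y _ => by
          rw [coe_decompose_smul_of_right_mem (𝒜 := 𝒜) _ (hmem y), hc, zero_smul]

section NormalDecomposition

variable {S M : Type*} [CommRing S] {𝒜 : ℤ → AddSubgroup S} [GradedRing 𝒜] [AddCommGroup M]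
  [Module S M] {ℳ : ℤ → AddSubgroup M} [Decomposition ℳ]

def spanAbove (L : ℤ → Submodule (gradeZero 𝒜) M) (j : ℤ) : Submodule S M :=
  Submodule.span S (⋃ i ≥ j, (L i : Set M))

variable (𝒜) in
/-- The degree-`k` part of `spanAbove L j` (see `coe_decompose_mem_spanAboveDeg`). -/
def spanAboveDeg (L : ℤ → Submodule (gradeZero 𝒜) M) (j k : ℤ) : AddSubgroup M :=
  AddSubgroup.closure {m | ∃ i, j ≤ i ∧ ∃ s ∈ 𝒜 (k - i), ∃ x ∈ L i, m = s • x}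

variable {L : ℤ → Submodule (gradeZero 𝒜) M}

theorem subset_spanAbove {i j : ℤ} (h : j ≤ i) : (L i : Set M) ⊆ spanAbove L j :=
  fun _ hx => Submodule.subset_span (Set.mem_iUnion₂.mpr ⟨i, h, hx⟩)

theorem spanAbove_eq_top_of_forall_lt_eq_bot
    (hLgen : ∀ n : ℤ, ℳ n =
      AddSubgroup.closure {m : M | ∃ i : ℤ, ∃ s ∈ 𝒜 (n - i), ∃ x ∈ L i, m = s • x})
    {j : ℤ} (hL : ∀ i < j, L i = ⊥) : spanAbove L j = ⊤ := by
  refine Submodule.eq_top_iff'.mpr fun m => ?_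
  induction m using Decomposition.inductionOn ℳ with
  | zero => exact zero_mem _
  | @homogeneous k x =>
    refine (AddSubgroup.closure_le (spanAbove L j).toAddSubgroup).mpr ?_ ((hLgen k).le x.2)
    rintro _ ⟨i, s, -, y, hy, rfl⟩
    by_cases hji : j ≤ i
    · exact Submodule.smul_mem _ s (subset_spanAbove hji hy)
    · rw [hL i (not_le.mp hji), Submodule.mem_bot] at hy
      simp [hy]
  | add a b ha hb => exact add_mem ha hb

variable [SetLike.GradedSMul 𝒜 ℳ]

theorem smul_mem_spanAboveDeg {j k r : ℤ} {s : S} (hs : s ∈ 𝒜 r) {w : M}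
    (hw : w ∈ spanAboveDeg 𝒜 L j (k - r)) : s • w ∈ spanAboveDeg 𝒜 L j k := by
  induction hw using AddSubgroup.closure_induction with
  | mem w hw =>
    obtain ⟨i, hji, s', hs', x, hx, rfl⟩ := hw
    refine AddSubgroup.subset_closure ⟨i, hji, s * s', ?_, x, hx, (mul_smul s s' x).symm⟩
    have := SetLike.mul_mem_graded hs hs'
    rwa [show r + (k - r - i) = k - i by ring] at this
  | zero => simp
  | add w w' _ _ hw hw' => simpa [smul_add] using add_mem hw hw'
  | neg w _ hw => simpa [smul_neg] using neg_mem hw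

theorem coe_decompose_mem_spanAboveDeg (hLsub : ∀ i, (L i : Set M) ⊆ ℳ i) {j : ℤ} {g : M}
    (hg : g ∈ spanAbove L j) (k : ℤ) : (decompose ℳ g k : M) ∈ spanAboveDeg 𝒜 L j k := by
  induction hg using Submodule.span_induction generalizing k with
  | mem x hx =>
    obtain ⟨i, hji, hx⟩ := Set.mem_iUnion₂.mp hx
    by_cases hik : i = k
    · subst hik
      rw [decompose_of_mem_same ℳ (hLsub i hx)]
      exact AddSubgroup.subset_closure
        ⟨i, hji, 1, by simpa using SetLike.one_mem_graded 𝒜, x, hx, (one_smul S x).symm⟩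
    · rw [decompose_of_mem_ne ℳ (hLsub i hx) hik]
      exact zero_mem _
  | zero => simp
  | add x y _ _ hx hy => simpa using add_mem (hx k) (hy k)
  | smul a x _ hx =>
    induction a using Decomposition.inductionOn 𝒜 with
    | zero => simp
    | homogeneous a =>
      rw [coe_decompose_smul_of_left_mem a.2]
      exact smul_mem_spanAboveDeg a.2 (hx _)
    | add a b ha hb => simpa [add_smul] using add_mem ha hb

theorem mem_spanAboveDeg_of_spanAbove_eq_top (hLsub : ∀ i, (L i : Set M) ⊆ ℳ i) {j k : ℤ}
    (htop : spanAbove L j = ⊤) {x : M} (hx : x ∈ ℳ k) : x ∈ spanAboveDeg 𝒜 L j k := by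
  simpa [decompose_of_mem_same ℳ hx] using
    coe_decompose_mem_spanAboveDeg hLsub (htop ▸ Submodule.mem_top : x ∈ spanAbove L j) k

end NormalDecomposition

/-- The ideal `J` of `S` with `M ⊗_{S,ν} R = M / J M`. -/
def nonzeroDegreeIdeal {S : Type*} [CommRing S] (𝒜 : ℤ → AddSubgroup S) : Ideal S :=
  Ideal.span {x | ∃ n : ℤ, n ≠ 0 ∧ x ∈ 𝒜 n}

namespace Frame

variable {p : ℕ} {S M : Type*} [CommRing S] {𝒜 : ℤ → AddSubgroup S} [GradedRing 𝒜]
  [AddCommGroup M] [Module S M] {ℳ : ℤ → AddSubgroup M} [Decomposition ℳ]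
  [SetLike.GradedSMul 𝒜 ℳ] {L : ℤ → Submodule (gradeZero 𝒜) M}

theorem coe_decompose_smul_mem_sup_jacobson_smul (F : Frame p S 𝒜)
    (hLsub : ∀ i, (L i : Set M) ⊆ ℳ i) {j : ℤ} (htop : spanAbove L j = ⊤) {n : ℤ} (hn : n ≠ 0)
    {u : S} (hu : u ∈ 𝒜 n) (g : M) :
    (decompose ℳ (u • g) j : M) ∈ (spanAbove L (j + 1)).restrictScalars (gradeZero 𝒜) ⊔
      (⊥ : Ideal (gradeZero 𝒜)).jacobson • L j := by
  rw [coe_decompose_smul_of_left_mem hu]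
  have hg := mem_spanAboveDeg_of_spanAbove_eq_top hLsub htop
    (SetLike.coe_mem (decompose ℳ g (j - n)))
  generalize (decompose ℳ g (j - n) : M) = w at hg ⊢
  induction hg using AddSubgroup.closure_induction with
  | mem w hw =>
    obtain ⟨i, hji, s, hs, x, hx, rfl⟩ := hw
    rw [smul_smul]
    rcases hji.eq_or_lt with rfl | hji
    · have hs' : s ∈ 𝒜 (-n) := by rwa [show j - n - j = -n by ring] at hs
      have hus : u * s ∈ 𝒜 0 := by simpa using SetLike.mul_mem_graded hu hs'
      exact Submodule.mem_sup_right <| Submodule.smul_mem_smul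
        (F.mem_jacobson_of_eq_mul hn hu hs' (c := ⟨u * s, hus⟩) rfl) hx
    · exact Submodule.mem_sup_left (Submodule.smul_mem _ _ (subset_spanAbove (by omega) hx))
  | zero => simp
  | add _ _ _ _ h h' => simpa [smul_add] using add_mem h h'
  | neg _ _ h => simpa [smul_neg] using neg_mem h

theorem coe_decompose_smul_mem_sup_jacobson_smul_of_mem (F : Frame p S 𝒜)
    (hLsub : ∀ i, (L i : Set M) ⊆ ℳ i) {j : ℤ} (htop : spanAbove L j = ⊤) {a : S}
    (ha : a ∈ nonzeroDegreeIdeal 𝒜) (g : M) :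
    (decompose ℳ (a • g) j : M) ∈ (spanAbove L (j + 1)).restrictScalars (gradeZero 𝒜) ⊔
      (⊥ : Ideal (gradeZero 𝒜)).jacobson • L j := by
  induction ha using Submodule.span_induction generalizing g with
  | mem u hu =>
    obtain ⟨n, hn, hu⟩ := hu
    exact F.coe_decompose_smul_mem_sup_jacobson_smul hLsub htop hn hu g
  | zero => simp
  | add a b _ _ ha hb => simpa [add_smul] using add_mem (ha g) (hb g)
  | smul c a _ ha => simpa [smul_eq_mul, mul_comm c, mul_smul] using ha (c • g)

theorem spanAbove_succ_eq_top (F : Frame p S 𝒜) (hLsub : ∀ i, (L i : Set M) ⊆ ℳ i) {j : ℤ}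
    (hLfin : Module.Finite (gradeZero 𝒜) (L j)) (htop : spanAbove L j = ⊤)
    (hdepth : (L j : Set M) ⊆ (nonzeroDegreeIdeal 𝒜 • ⊤ : Submodule S M)) :
    spanAbove L (j + 1) = ⊤ := by
  have hLj : L j ≤ (spanAbove L (j + 1)).restrictScalars (gradeZero 𝒜) := by
    refine Submodule.le_of_le_smul_of_le_jacobson_bot (Module.Finite.iff_fg.mp hLfin) le_rfl
      fun x hx => ?_
    rw [← decompose_of_mem_same ℳ (hLsub j hx)]
    exact Submodule.smul_induction_on (hdepth hx)
      (fun a ha g _ => F.coe_decompose_smul_mem_sup_jacobson_smul_of_mem hLsub htop ha g)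
      fun y y' h h' => by simpa using add_mem h h'
  refine eq_top_iff.mpr (htop ▸ Submodule.span_le.mpr ?_)
  intro x hx
  obtain ⟨i, hji, hx⟩ := Set.mem_iUnion₂.mp hx
  rcases hji.eq_or_lt with rfl | hji
  · exact hLj hx
  · exact subset_spanAbove (by omega) hx

theorem spanAbove_eq_top_of_depth (F : Frame p S 𝒜) (hLsub : ∀ i, (L i : Set M) ⊆ ℳ i)
    (hLfin : ∀ i, Module.Finite (gradeZero 𝒜) (L i)) (hLbdd : {i : ℤ | L i ≠ ⊥}.Finite)
    (hLgen : ∀ n : ℤ, ℳ n =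
      AddSubgroup.closure {m : M | ∃ i : ℤ, ∃ s ∈ 𝒜 (n - i), ∃ x ∈ L i, m = s • x})
    {d : ℤ} (hdepth : ∀ i < d, (L i : Set M) ⊆ (nonzeroDegreeIdeal 𝒜 • ⊤ : Submodule S M)) :
    spanAbove L d = ⊤ := by
  obtain ⟨b, hb⟩ := hLbdd.bddBelow
  suffices h : ∀ j, min b d ≤ j → j ≤ d → spanAbove L j = ⊤ from h d (min_le_right b d) le_rfl
  intro j hj
  induction j, hj using Int.leInduction with
  | base =>
    refine fun _ => spanAbove_eq_top_of_forall_lt_eq_bot hLgen fun i hi => ?_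
    by_contra h
    exact absurd (hb h) (by omega)
  | succ j hj ih =>
    exact fun hjd => F.spanAbove_succ_eq_top hLsub (hLfin j) (ih (by omega)) (hdepth j (by omega))

theorem exists_eq_t_pow_smul (F : Frame p S 𝒜) (hLsub : ∀ i, (L i : Set M) ⊆ ℳ i) {d : ℤ}
    (htop : spanAbove L d = ⊤) {n : ℤ} (hn : n ≤ d) (m : ℕ) {x : M} (hx : x ∈ ℳ (n - m)) :
    ∃ y ∈ ℳ n, x = F.t ^ m • y := by
  replace hx := mem_spanAboveDeg_of_spanAbove_eq_top hLsub htop hx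
  induction hx using AddSubgroup.closure_induction with
  | mem w hw =>
    obtain ⟨i, hdi, s, hs, z, hz, rfl⟩ := hw
    obtain ⟨e, rfl⟩ := Int.le.dest (hn.trans hdi)
    have hs' : s ∈ 𝒜 (-((m + e : ℕ) : ℤ)) := by
      rwa [show n - m - (n + e) = -((m + e : ℕ) : ℤ) by push_cast; ring] at hs
    refine ⟨(F.τ s * F.t ^ e) • z, ?_, ?_⟩
    · have := SetLike.GradedSMul.smul_mem (SetLike.mul_mem_graded (F.τ_mem s) (F.t_pow_mem_s6 e))
        (hLsub _ hz)
      rwa [show (0 + -(e : ℤ)) +ᵥ (n + e) = n by simp] at this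
    · rw [smul_smul]
      congr 1
      conv_lhs => rw [F.eq_τ_mul_t_pow hs']
      ring
  | zero => exact ⟨0, zero_mem _, (smul_zero _).symm⟩
  | add _ _ _ _ h h' =>
    obtain ⟨y, hy, rfl⟩ := h
    obtain ⟨y', hy', rfl⟩ := h'
    exact ⟨y + y', add_mem hy hy', (smul_add _ _ _).symm⟩
  | neg _ _ h =>
    obtain ⟨y, hy, rfl⟩ := h
    exact ⟨-y, neg_mem hy, (smul_neg _ _).symm⟩

end Frame

theorem stmt_6_general (p : ℕ) (S : Type*) [CommRing S]
    (𝒜 : ℤ → AddSubgroup S) [GradedRing 𝒜] (F : Frame p S 𝒜)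
    (M : Type*) [AddCommGroup M] [Module S M]
    (ℳ : ℤ → AddSubgroup M) [DirectSum.Decomposition ℳ]
    (hsmul : ∀ (i j : ℤ), ∀ s ∈ 𝒜 i, ∀ x ∈ ℳ j, s • x ∈ ℳ (i + j))
    [Module.Projective S M]
    -- a normal decomposition `L` of `M`:
    (L : ℤ → Submodule (gradeZero 𝒜) M)
    (hLsub : ∀ i : ℤ, (L i : Set M) ⊆ (ℳ i : AddSubgroup M))
    (hLfin : ∀ i : ℤ, Module.Finite (gradeZero 𝒜) (L i))
    (hLbdd : {i : ℤ | L i ≠ ⊥}.Finite)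
    (hLgen : ∀ n : ℤ, ℳ n =
      AddSubgroup.closure {m : M | ∃ i : ℤ, ∃ s ∈ 𝒜 (n - i), ∃ x ∈ L i, m = s • x})
    -- `d` is at most the depth of `M`: the reductions `L̄ᵢ` vanish for `i < d`:
    (d : ℤ)
    (hdepth : ∀ i : ℤ, i < d → (L i : Set M) ⊆
      ((Ideal.span {x : S | ∃ n : ℤ, n ≠ 0 ∧ x ∈ 𝒜 n} • (⊤ : Submodule S M) :
        Submodule S M) : Set M)) :
    ∀ n : ℤ, n ≤ d →
      Function.Bijective (fun x : (ℳ n : AddSubgroup M) =>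
        (Submodule.Quotient.mk (x : M) :
          M ⧸ (Ideal.span ({F.t - 1} : Set S) • (⊤ : Submodule S M) : Submodule S M))) := by
  have : SetLike.GradedSMul 𝒜 ℳ := ⟨fun i j _ _ hs hx => hsmul i j _ hs _ hx⟩
  have htop : spanAbove L d = ⊤ := F.spanAbove_eq_top_of_depth hLsub hLfin hLbdd hLgen hdepth
  intro n hn
  refine ⟨injective_mk_of_forall_t_pow_smul_eq_zero F.t_mem n fun m x hx hmx => ?_,
    surjective_mk_of_forall_eq_t_pow_smul F.t_mem n (F.exists_eq_t_pow_smul hLsub htop hn)⟩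
  refine eq_zero_of_smul_eq_zero_of_projective htop (fun y hy => ?_) (F.t_pow_mem_s6 m)
    (fun j hj a ha => F.eq_zero_of_t_pow_mul_eq_zero hj ha m) hx hmx
  obtain ⟨i, hdi, hy⟩ := Set.mem_iUnion₂.mp hy
  exact ⟨i, hn.trans hdi, hLsub i hy⟩

/-- Let `S` be a frame, `M` a finite projective graded `S`-module with a
normal decomposition `L = ⊕ᵢ Lᵢ`, and let `d` be the depth of `M` (so the images `L̄ᵢ`
of the `Lᵢ` in `M ⊗_{S,ν} R = M/JM` vanish for `i < d`).  Then for every `n ≤ d` the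
natural `S₀`-module map `θₙ : Mₙ → M^τ = M ⊗_{S,τ} S₀ = M/(t−1)M` (inclusion followed by
the quotient map) is bijective, hence an isomorphism of `S₀`-modules. -/
theorem stmt_6 (p : ℕ) [Fact p.Prime] (S : Type*) [CommRing S]
    (𝒜 : ℤ → AddSubgroup S) [GradedRing 𝒜] (F : Frame p S 𝒜)
    (M : Type*) [AddCommGroup M] [Module S M]
    (ℳ : ℤ → AddSubgroup M) [DirectSum.Decomposition ℳ]
    (hsmul : ∀ (i j : ℤ), ∀ s ∈ 𝒜 i, ∀ x ∈ ℳ j, s • x ∈ ℳ (i + j))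
    [Module.Finite S M] [Module.Projective S M]
    -- a normal decomposition `L` of `M`:
    (L : ℤ → Submodule (gradeZero 𝒜) M)
    (hLsub : ∀ i : ℤ, (L i : Set M) ⊆ (ℳ i : AddSubgroup M))
    (hLfin : ∀ i : ℤ, Module.Finite (gradeZero 𝒜) (L i))
    (hLproj : ∀ i : ℤ, Module.Projective (gradeZero 𝒜) (L i))
    (hLbdd : {i : ℤ | L i ≠ ⊥}.Finite)
    (hLgen : ∀ n : ℤ, ℳ n =
      AddSubgroup.closure {m : M | ∃ i : ℤ, ∃ s ∈ 𝒜 (n - i), ∃ x ∈ L i, m = s • x})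
    -- `d` is at most the depth of `M`: the reductions `L̄ᵢ` vanish for `i < d`:
    (d : ℤ)
    (hdepth : ∀ i : ℤ, i < d → (L i : Set M) ⊆
      ((Ideal.span {x : S | ∃ n : ℤ, n ≠ 0 ∧ x ∈ 𝒜 n} • (⊤ : Submodule S M) :
        Submodule S M) : Set M)) :
    ∀ n : ℤ, n ≤ d →
      Function.Bijective (fun x : (ℳ n : AddSubgroup M) =>
        (Submodule.Quotient.mk (x : M) :
          M ⧸ (Ideal.span ({F.t - 1} : Set S) • (⊤ : Submodule S M) : Submodule S M))) :=
  stmt_6_general p S 𝒜 F M ℳ hsmul L hLsub hLfin hLbdd hLgen d hdepth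
end

section
/- Let R → R' be a faithfully flat homomorphism of commutative rings. Then the induced homomorphism of Witt vector rings W(R) → W(R') is injective, and more generally the sequence 0 → W(R) → W(R') ⇉ W(R' ⊗_R R') (the two maps induced by r' ↦ r'⊗1 and r' ↦ 1⊗r') is exact. -/
set_option linter.unusedSectionVars false

open WittVector TensorProduct

section Aux

variable (R R' : Type) [CommRing R] [CommRing R'] [Algebra R R']
  [Module.FaithfullyFlat R R']

private noncomputable def auxL : R →ₗ[R] R' := Algebra.linearMap R R'

private noncomputable def auxD : R' →ₗ[R] R' ⊗[R] R' :=
  (TensorProduct.mk R R' R').flip 1 - TensorProduct.mk R R' R' 1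

@[simp] private lemma auxD_apply (x : R') : auxD R R' x = x ⊗ₜ[R] 1 - 1 ⊗ₜ[R] x := rfl

private noncomputable def auxM : (R' ⊗[R] R') ⊗[R] R' →ₗ[R] R' ⊗[R] R' :=
  (LinearMap.lTensor R' (LinearMap.mul' R R')) ∘ₗ (TensorProduct.assoc R R' R' R').toLinearMap

private lemma auxMu_comp_rTensor (z : R ⊗[R] R') :
    LinearMap.mul' R R' ((auxL R R').rTensor R' z) = TensorProduct.lid R R' z := by
  induction z using TensorProduct.induction_on with
  | zero => simp
  | tmul r b => simp [auxL, Algebra.smul_def]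
  | add x y hx hy => simp [map_add, hx, hy]

private lemma auxL_rTensor_injective :
    Function.Injective ((auxL R R').rTensor R') := by
  intro x y h
  have := congrArg (LinearMap.mul' R R') h
  rw [auxMu_comp_rTensor, auxMu_comp_rTensor] at this
  exact (TensorProduct.lid R R').injective this

private lemma auxKey (z : R' ⊗[R] R') :
    auxM R R' ((auxD R R').rTensor R' z) = z - 1 ⊗ₜ[R] (LinearMap.mul' R R' z) := by
  induction z using TensorProduct.induction_on with
  | zero => simp
  | tmul a b =>
    simp only [LinearMap.rTensor_tmul, auxD_apply, sub_tmul, map_sub, auxM,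
      LinearMap.coe_comp, Function.comp_apply, LinearEquiv.coe_coe,
      TensorProduct.assoc_tmul, LinearMap.lTensor_tmul, LinearMap.mul'_apply, one_mul]
  | add x y hx hy => simp only [map_add, hx, hy, tmul_add]; abel

private lemma auxExact : Function.Exact (auxL R R') (auxD R R') := by
  apply Module.FaithfullyFlat.rTensor_reflects_exact R R'
  intro z
  constructor
  · intro hz
    refine ⟨(1 : R) ⊗ₜ[R] LinearMap.mul' R R' z, ?_⟩
    have := auxKey R R' z
    rw [hz, map_zero] at this
    have hz' : z = 1 ⊗ₜ[R] (LinearMap.mul' R R' z) := sub_eq_zero.mp this.symm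
    rw [LinearMap.rTensor_tmul]
    simp only [auxL, Algebra.linearMap_apply, map_one]
    exact hz'.symm
  · rintro ⟨w, rfl⟩
    induction w using TensorProduct.induction_on with
    | zero => simp
    | tmul r b =>
      simp only [LinearMap.rTensor_tmul, auxL, Algebra.linearMap_apply, auxD_apply,
        Algebra.algebraMap_eq_smul_one, sub_tmul, smul_tmul', smul_tmul]
      abel
    | add x y hx hy => rw [map_add, map_add, hx, hy, add_zero]

private lemma auxInjective : Function.Injective (algebraMap R R') := by
  rw [injective_iff_map_eq_zero]
  intro r hr
  have hker : Function.Exact ((0 : R →ₗ[R] R).rTensor R') ((auxL R R').rTensor R') := by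
    intro z
    constructor
    · intro hz
      exact ⟨0, by rw [map_zero]; exact (map_eq_zero_iff _ (auxL_rTensor_injective R R')).mp hz
        |>.symm⟩
    · rintro ⟨w, rfl⟩
      rw [LinearMap.rTensor_zero, LinearMap.zero_apply, map_zero]
  have hex : Function.Exact (0 : R →ₗ[R] R) (auxL R R') :=
    Module.FaithfullyFlat.rTensor_reflects_exact R R' _ _ hker
  have : auxL R R' r = 0 := by simpa [auxL] using hr
  obtain ⟨w, hw⟩ := (hex r).mp this
  rw [← hw, LinearMap.zero_apply]

private lemma auxDescent (x : R') (hx : x ⊗ₜ[R] (1 : R') = 1 ⊗ₜ[R] x) :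
    ∃ r : R, algebraMap R R' r = x := by
  have : auxD R R' x = 0 := by rw [auxD_apply, hx, sub_self]
  obtain ⟨r, hr⟩ := (auxExact R R' x).mp this
  exact ⟨r, hr⟩

end Aux

/-- If `R → R'` is faithfully flat, then `W(R) → W(R')` is injective, and
the sequence `0 → W(R) → W(R') ⇉ W(R' ⊗[R] R')` is exact (the parallel maps being induced
by `r' ↦ r' ⊗ 1` and `r' ↦ 1 ⊗ r'`). -/
theorem stmt_7 (p : ℕ) [hp : Fact p.Prime] (R R' : Type) [CommRing R] [CommRing R']
    [Algebra R R'] [Module.FaithfullyFlat R R'] :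
    Function.Injective (WittVector.map (p := p) (algebraMap R R')) ∧
    ∀ x : WittVector p R',
      WittVector.map (Algebra.TensorProduct.includeLeftRingHom : R' →+* R' ⊗[R] R') x =
        WittVector.map (Algebra.TensorProduct.includeRight : R' →ₐ[R] R' ⊗[R] R').toRingHom x →
      ∃ y : WittVector p R, WittVector.map (algebraMap R R') y = x := by
  constructor
  · exact WittVector.map_injective _ (auxInjective R R')
  · intro x hx
    have hcoeff : ∀ n, ∃ r : R, algebraMap R R' r = x.coeff n := by
      intro n
      apply auxDescent R R'
      have := congrArg (fun w => w.coeff n) hx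
      simpa [WittVector.map_coeff, Algebra.TensorProduct.includeLeftRingHom,
        Algebra.TensorProduct.includeRight] using this
    refine ⟨WittVector.mk p (fun n => (hcoeff n).choose), ?_⟩
    ext n
    rw [WittVector.map_coeff]
    exact (hcoeff n).choose_spec
end

section
/- Let R → R' be a faithfully flat homomorphism of commutative rings, and let I_R = ker(w_0 : W(R) → R), I_{R'} = ker(w_0 : W(R') → R'). Then the sequence 0 → I_R → I_{R'} ⇉ I_{R'⊗_R R'} is exact, where the two parallel maps are induced by the two canonical ring maps R' → R' ⊗_R R'. -/
/-!
Witt vectors are sequences of coefficients and all the maps involved act coefficientwise, so the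
statement reduces to faithfully flat descent for `R → R'` itself: `algebraMap R R'` is injective,
and its image is the equalizer of the two maps `R' → R' ⊗[R] R'`.
-/

open WittVector TensorProduct

namespace WittVector

variable {p : ℕ} [Fact p.Prime] {R S T : Type*} [CommRing R] [CommRing S] [CommRing T]

theorem constantCoeff_map (f : R →+* S) (x : WittVector p R) :
    constantCoeff (map f x) = f (constantCoeff x) :=
  rfl

theorem map_eq_map_iff (f g : S →+* T) (x : WittVector p S) :
    map f x = map g x ↔ ∀ n, f (x.coeff n) = g (x.coeff n) := by
  refine ⟨fun h n => ?_, fun h => ext fun n => ?_⟩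
  · simpa only [map_coeff] using congrArg (coeff · n) h
  · simpa only [map_coeff] using h n

theorem mem_range_map_iff (f : R →+* S) (x : WittVector p S) :
    x ∈ Set.range (map f) ↔ ∀ n, x.coeff n ∈ Set.range f := by
  refine ⟨?_, fun h => ?_⟩
  · rintro ⟨y, rfl⟩ n
    exact ⟨y.coeff n, (map_coeff f y n).symm⟩
  · choose c hc using h
    exact ⟨mk p c, ext fun n => hc n⟩

theorem eqLocus_map_includeLeft_includeRight [Algebra R S] (h : Algebra.IsEffective R S) :
    ((map (p := p) (Algebra.TensorProduct.includeLeftRingHom : S →+* S ⊗[R] S)).eqLocus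
        (map (Algebra.TensorProduct.includeRight : S →ₐ[R] S ⊗[R] S).toRingHom) :
          Set (WittVector p S)) =
      Set.range (map (algebraMap R S)) := by
  ext x
  rw [SetLike.mem_coe, RingHom.mem_eqLocus, map_eq_map_iff, mem_range_map_iff]
  refine forall_congr' fun n => ?_
  rw [← h.eqLocus_includeLeft_includeRight, SetLike.mem_coe, RingHom.mem_eqLocus]

end WittVector

/-- If `R → R'` is faithfully flat and `I_R = ker (w₀ : W(R) → R)`, then the
sequence `0 → I_R → I_{R'} ⇉ I_{R' ⊗_R R'}` is exact: the map `I_R → I_{R'}` is injective,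
and an element of `I_{R'}` on which the two canonical maps to `I_{R' ⊗_R R'}` agree comes
from a unique element of `I_R`. -/
theorem stmt_8 (p : ℕ) [hp : Fact p.Prime] (R R' : Type) [CommRing R] [CommRing R']
    [Algebra R R'] [Module.FaithfullyFlat R R'] :
    (∀ y y' : WittVector p R, constantCoeff y = 0 → constantCoeff y' = 0 →
        WittVector.map (algebraMap R R') y = WittVector.map (algebraMap R R') y' → y = y') ∧
    ∀ x : WittVector p R', constantCoeff x = 0 →
      WittVector.map (Algebra.TensorProduct.includeLeftRingHom : R' →+* R' ⊗[R] R') x =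
        WittVector.map (Algebra.TensorProduct.includeRight : R' →ₐ[R] R' ⊗[R] R').toRingHom x →
      ∃ y : WittVector p R, constantCoeff y = 0 ∧ WittVector.map (algebraMap R R') y = x := by
  have hinj : Function.Injective (algebraMap R R') := FaithfulSMul.algebraMap_injective R R'
  refine ⟨fun y y' _ _ h => WittVector.map_injective _ hinj h, fun x hx hequal => ?_⟩
  obtain ⟨y, rfl⟩ := (WittVector.eqLocus_map_includeLeft_includeRight
    (Algebra.IsEffective.of_faithfullyFlat R R')).subset hequal
  exact ⟨y, hinj (by rw [← constantCoeff_map, hx, map_zero]), rfl⟩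
end

section
/- Let R be a p-adic ring and W(R) its Witt vectors with Frobenius f, Verschiebung v, and I_R = v(W(R)). Let (M, F) be a 1-display over the Witt frame with normal decomposition L = L_0 ⊕ L_1 (finite projective W(R)-modules) and Φ = F|_L a f-linear map whose linearization Φ^♯ : L^f → L is bijective. Set P_0 = L_0 ⊕ L_1, P_1 = I_R L_0 ⊕ L_1, F_0 = F|_{P_0} and F_1 the induced f-linear map P_1 → P_0. Then (P_0, P_1, F_0, F_1) is a Zink display: (i) I_R P_0 ⊆ P_1 ⊆ P_0 with finite projective graded quotients P_0/P_1 ≅ L_0 ⊗_{W(R)} R and P_1/I_R P_0 ≅ L_1 ⊗_{W(R)} R; (ii) F_1 is an f-linear epimorphism; (iii) F_1(v(ξ)·x) = ξ·F_0(x) for all ξ ∈ W(R), x ∈ P_0. -/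
open WittVector

/-- `W(R)` regarded as an algebra over itself via the Witt vector Frobenius. -/
def FrobBase (p : ℕ) (R : Type) [CommRing R] [Fact p.Prime] := WittVector p R

noncomputable instance (p : ℕ) (R : Type) [CommRing R] [Fact p.Prime] :
    CommRing (FrobBase p R) := inferInstanceAs (CommRing (WittVector p R))

/-- The Frobenius `f : W(R) → W(R)`, regarded as a ring map into `FrobBase p R`. -/
noncomputable def frobTo (p : ℕ) (R : Type) [CommRing R] [Fact p.Prime] :
    WittVector p R →+* FrobBase p R := WittVector.frobenius

noncomputable instance (p : ℕ) (R : Type) [CommRing R] [Fact p.Prime] :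
    Algebra (WittVector p R) (FrobBase p R) := (frobTo p R).toAlgebra

/-- An additive `f`-semilinear map `Φ : L → L'` of `W(R)`-modules is an `f`-linear
bijection if its linearization `Φ^♯ : L^f = W(R) ⊗_{W(R),f} L → L'` is bijective,
i.e. there is an additive isomorphism `e : L^f ≃ L'` with `e (a ⊗ x) = a • Φ x`. -/
def IsFLinearBij (p : ℕ) (R : Type) [CommRing R] [Fact p.Prime]
    {L L' : Type} [AddCommGroup L] [AddCommGroup L']
    [Module (WittVector p R) L] [Module (WittVector p R) L']
    (Φ : L →+ L') : Prop :=
  ∃ e : TensorProduct (WittVector p R) (FrobBase p R) L ≃+ L',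
    ∀ (a : FrobBase p R) (x : L),
      e (TensorProduct.tmul _ a x) = (show WittVector p R from a) • Φ x

/-! Since `v` is injective with image `I_R = ker w₀` and `v(f(a)ξ) = a v(ξ)`, it is a
`W(R)`-linear isomorphism `W(R)^f ≅ I_R`; tensoring with the flat module `L₀` gives
`L₀^f ≅ I_R L₀`, `ξ ⊗ x ↦ v(ξ) x`. So `v(ξ)x₀ + x₁ ↦ ξ ⊗ x₀ + 1 ⊗ x₁` is a well-defined linear
map `P₁ → L^f`, and `F₁` is its composite with the linearization of `Φ`. It is `f`-linear, its
image contains the image of `Φ`, which spans, and `F₁(v(ξ)x) = ξΦ(x₀) + Φ(v(ξ)x₁)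
= ξ(Φ(x₀) + pΦ(x₁))` because `f ∘ v = p`. The graded pieces of `P₁` are computed componentwise,
and `L / I_R L ≅ W(R)/I_R ⊗ L` is finite projective over `W(R)/I_R`. -/

open TensorProduct

section Flat

variable {S M : Type*} [CommRing S] [AddCommGroup M] [Module S M]

noncomputable def Ideal.tensorEquivSMulTop (I : Ideal S) [Module.Flat S M] :
    I ⊗[S] M ≃ₗ[S] (I • ⊤ : Submodule S M) :=
  (LinearEquiv.ofInjective ((TensorProduct.lid S M).toLinearMap ∘ₗ I.subtype.rTensor M)
      ((TensorProduct.lid S M).injective.comp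
      (Module.Flat.rTensor_preserves_injective_linearMap I.subtype Subtype.val_injective))).trans
    (LinearEquiv.ofEq _ _ (by
      rw [LinearMap.range_comp, Submodule.map_range_rTensor_subtype_lid]))

theorem Ideal.tensorEquivSMulTop_tmul (I : Ideal S) [Module.Flat S M] (r : I) (m : M) :
    (I.tensorEquivSMulTop (r ⊗ₜ m) : M) = (r : S) • m := by
  simp [Ideal.tensorEquivSMulTop]

end Flat

section Quotient

variable {S M N : Type*} [CommRing S] [AddCommGroup M] [Module S M] [AddCommGroup N] [Module S N]

theorem Submodule.smul_top_prod (I : Ideal S) :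
    I • (⊤ : Submodule S (M × N)) = (I • ⊤ : Submodule S M).prod (I • ⊤) := by
  refine le_antisymm (Submodule.smul_le.2 fun r hr _ _ =>
    ⟨Submodule.smul_mem_smul hr trivial, Submodule.smul_mem_smul hr trivial⟩) ?_
  rintro ⟨a, b⟩ ⟨ha, hb⟩
  rw [← Prod.fst_add_snd (a, b)]
  exact add_mem (Submodule.smul_top_le_comap_smul_top I (LinearMap.inl S M N) ha)
    (Submodule.smul_top_le_comap_smul_top I (LinearMap.inr S M N) hb)

noncomputable def Submodule.quotientProdTopEquiv (A : Submodule S M) :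
    ((M × N) ⧸ A.prod (⊤ : Submodule S N)) ≃ₗ[S] M ⧸ A :=
  (Submodule.quotEquivOfEq _ _ (by
      rw [LinearMap.ker_comp, Submodule.ker_mkQ, Submodule.comap_fst])).trans
    ((A.mkQ ∘ₗ LinearMap.fst S M N).quotKerEquivOfSurjective
      (A.mkQ_surjective.comp Prod.fst_surjective))

noncomputable def Submodule.prodTopQuotientEquiv (A : Submodule S M) (B : Submodule S N) :
    (A.prod (⊤ : Submodule S N) ⧸ (A.prod B).comap (A.prod ⊤).subtype) ≃ₗ[S] N ⧸ B :=
  (Submodule.quotEquivOfEq _ _ (by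
      ext x
      simp [(Submodule.mem_prod.1 x.2).1])).trans
    ((B.mkQ ∘ₗ LinearMap.snd S M N ∘ₗ (A.prod ⊤).subtype).quotKerEquivOfSurjective
      (fun y => by
        obtain ⟨n, rfl⟩ := B.mkQ_surjective y
        exact ⟨⟨(0, n), Submodule.mem_prod.2 ⟨A.zero_mem, trivial⟩⟩, rfl⟩))

instance Module.Projective.quotient_smul_top (I : Ideal S) [Module.Projective S M] :
    Module.Projective (S ⧸ I) (M ⧸ I • (⊤ : Submodule S M)) :=
  have : IsScalarTower S (S ⧸ I) (M ⧸ I • (⊤ : Submodule S M)) :=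
    Module.IsTorsionBySet.isScalarTower _
  .of_equiv ((TensorProduct.quotTensorEquivQuotSMul M I).extendScalarsOfSurjective
    Ideal.Quotient.mk_surjective)

end Quotient

namespace WittVector

variable {p : ℕ} [Fact p.Prime] {R : Type} [CommRing R]

theorem mem_ker_constantCoeff_iff {x : WittVector p R} :
    x ∈ RingHom.ker (constantCoeff (p := p)) ↔ ∃ y, verschiebung y = x := by
  constructor
  · intro hx
    exact ⟨x.shift 1, (eq_iterate_verschiebung (n := 1) fun i hi => by
      rw [Nat.lt_one_iff.1 hi]; exact hx).symm⟩
  · rintro ⟨y, rfl⟩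
    exact verschiebung_coeff_zero y

variable (p R)

-- The identity map; only the `W(R)`-module structure changes, to the one through `f`.
noncomputable def toFrobBase : WittVector p R ≃+* FrobBase p R := RingEquiv.refl _

variable {p R} in
theorem smul_toFrobBase (w ξ : WittVector p R) :
    w • toFrobBase p R ξ = toFrobBase p R (frobenius w * ξ) :=
  Algebra.smul_def w _

noncomputable def frobBaseVerschiebung : FrobBase p R →ₗ[WittVector p R] WittVector p R where
  toFun ξ := verschiebung ((toFrobBase p R).symm ξ)
  map_add' := by simp
  map_smul' w ξ := by
    obtain ⟨ξ, rfl⟩ := (toFrobBase p R).surjective ξ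
    rw [smul_toFrobBase, RingEquiv.symm_apply_apply, RingEquiv.symm_apply_apply,
      RingHom.id_apply, smul_eq_mul, mul_comm, verschiebung_mul_frobenius, mul_comm]

noncomputable def frobBaseEquivKer :
    FrobBase p R ≃ₗ[WittVector p R] RingHom.ker (constantCoeff (p := p) (R := R)) :=
  (LinearEquiv.ofInjective (frobBaseVerschiebung p R)
      ((verschiebung_injective p R).comp (toFrobBase p R).symm.injective)).trans
    (LinearEquiv.ofEq _ _ (by
      ext x
      rw [LinearMap.mem_range, (toFrobBase p R).surjective.exists, mem_ker_constantCoeff_iff]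
      rfl))

noncomputable def frobTwistEquiv (L : Type) [AddCommGroup L] [Module (WittVector p R) L]
    [Module.Flat (WittVector p R) L] :
    FrobBase p R ⊗[WittVector p R] L ≃ₗ[WittVector p R]
      (RingHom.ker (constantCoeff (p := p) (R := R)) • ⊤ : Submodule (WittVector p R) L) :=
  ((frobBaseEquivKer p R).rTensor L).trans (Ideal.tensorEquivSMulTop _)

theorem frobTwistEquiv_tmul (L : Type) [AddCommGroup L] [Module (WittVector p R) L]
    [Module.Flat (WittVector p R) L] (ξ : WittVector p R) (y : L) :
    (frobTwistEquiv p R L (toFrobBase p R ξ ⊗ₜ y) : L) = verschiebung ξ • y := by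
  simp [frobTwistEquiv, Ideal.tensorEquivSMulTop_tmul]
  rfl

variable {p R}

theorem map_smul_of_map_tmul {L L' : Type} [AddCommGroup L] [AddCommGroup L']
    [Module (WittVector p R) L] [Module (WittVector p R) L'] {Φ : L →+ L'}
    {e : FrobBase p R ⊗[WittVector p R] L →+ L'}
    (he : ∀ (ξ : WittVector p R) (x : L), e (toFrobBase p R ξ ⊗ₜ x) = ξ • Φ x)
    (w : WittVector p R) (t : FrobBase p R ⊗[WittVector p R] L) :
    e (w • t) = frobenius w • e t := by
  induction t using TensorProduct.induction_on with
  | zero => simp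
  | tmul a x =>
    obtain ⟨ξ, rfl⟩ := (toFrobBase p R).surjective a
    rw [TensorProduct.smul_tmul', smul_toFrobBase, he, he, mul_smul]
  | add a b ha hb => rw [smul_add, map_add, map_add, ha, hb, smul_add]

theorem span_range_eq_top_of_isFLinearBij {L L' : Type} [AddCommGroup L] [AddCommGroup L']
    [Module (WittVector p R) L] [Module (WittVector p R) L'] {Φ : L →+ L'}
    (hΦ : IsFLinearBij p R Φ) : Submodule.span (WittVector p R) (Set.range Φ) = ⊤ := by
  obtain ⟨e, he⟩ := hΦ
  rw [eq_top_iff]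
  rintro y -
  obtain ⟨t, rfl⟩ := e.surjective y
  induction t using TensorProduct.induction_on with
  | zero => simp
  | tmul a x => rw [he]; exact Submodule.smul_mem _ _ (Submodule.subset_span ⟨x, rfl⟩)
  | add a b ha hb => rw [map_add]; exact add_mem ha hb

variable (p R) (L₀ L₁ : Type) [AddCommGroup L₀] [AddCommGroup L₁]
  [Module (WittVector p R) L₀] [Module (WittVector p R) L₁]

noncomputable abbrev standardP₁ : Submodule (WittVector p R) (L₀ × L₁) :=
  (RingHom.ker (constantCoeff (p := p) (R := R)) • ⊤ : Submodule (WittVector p R) L₀).prod ⊤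

variable [Module.Flat (WittVector p R) L₀]

noncomputable def standardP₁ToTwist :
    standardP₁ p R L₀ L₁ →ₗ[WittVector p R] FrobBase p R ⊗[WittVector p R] (L₀ × L₁) :=
  (LinearMap.inl _ L₀ L₁).lTensor _ ∘ₗ (frobTwistEquiv p R L₀).symm.toLinearMap ∘ₗ
      (LinearMap.fst _ L₀ L₁ ∘ₗ (standardP₁ p R L₀ L₁).subtype).codRestrict _
        (fun x => (Submodule.mem_prod.1 x.2).1) +
    TensorProduct.mk _ _ _ 1 ∘ₗ LinearMap.inr _ L₀ L₁ ∘ₗ LinearMap.snd _ L₀ L₁ ∘ₗ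
      (standardP₁ p R L₀ L₁).subtype

variable {p R L₀ L₁}

theorem standardP₁ToTwist_mk (ξ : WittVector p R) (x₀ : L₀) (x₁ : L₁)
    (h : (verschiebung ξ • x₀, x₁) ∈ standardP₁ p R L₀ L₁) :
    standardP₁ToTwist p R L₀ L₁ ⟨(verschiebung ξ • x₀, x₁), h⟩ =
      toFrobBase p R ξ ⊗ₜ (x₀, 0) + toFrobBase p R 1 ⊗ₜ (0, x₁) := by
  have hT : (frobTwistEquiv p R L₀).symm ⟨verschiebung ξ • x₀, (Submodule.mem_prod.1 h).1⟩ =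
      toFrobBase p R ξ ⊗ₜ x₀ := by
    rw [LinearEquiv.symm_apply_eq]
    exact Subtype.ext (frobTwistEquiv_tmul p R L₀ ξ x₀).symm
  simp [standardP₁ToTwist, LinearMap.codRestrict, hT]

noncomputable def standardF₁ (e : FrobBase p R ⊗[WittVector p R] (L₀ × L₁) →+ L₀ × L₁) :
    standardP₁ p R L₀ L₁ →+ L₀ × L₁ :=
  e.comp (standardP₁ToTwist p R L₀ L₁).toAddMonoidHom

variable {Φ : (L₀ × L₁) →+ (L₀ × L₁)} {e : FrobBase p R ⊗[WittVector p R] (L₀ × L₁) →+ L₀ × L₁}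

theorem standardF₁_mk
    (he : ∀ (ξ : WittVector p R) (x : L₀ × L₁), e (toFrobBase p R ξ ⊗ₜ x) = ξ • Φ x)
    (ξ : WittVector p R) (x₀ : L₀) (x₁ : L₁)
    (h : (verschiebung ξ • x₀, x₁) ∈ standardP₁ p R L₀ L₁) :
    standardF₁ e ⟨(verschiebung ξ • x₀, x₁), h⟩ = ξ • Φ (x₀, 0) + Φ (0, x₁) := by
  rw [standardF₁, AddMonoidHom.comp_apply, LinearMap.toAddMonoidHom_coe, standardP₁ToTwist_mk,
    map_add, he, he, one_smul]

theorem standardF₁_smul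
    (he : ∀ (ξ : WittVector p R) (x : L₀ × L₁), e (toFrobBase p R ξ ⊗ₜ x) = ξ • Φ x)
    (w : WittVector p R) (x : standardP₁ p R L₀ L₁) :
    standardF₁ e (w • x) = frobenius w • standardF₁ e x := by
  simp only [standardF₁, AddMonoidHom.comp_apply, LinearMap.toAddMonoidHom_coe, map_smul]
  exact map_smul_of_map_tmul he w _

theorem span_range_standardF₁
    (he : ∀ (ξ : WittVector p R) (x : L₀ × L₁), e (toFrobBase p R ξ ⊗ₜ x) = ξ • Φ x)
    (hΦ : IsFLinearBij p R Φ) :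
    Submodule.span (WittVector p R) (Set.range (standardF₁ e)) = ⊤ := by
  refine eq_top_iff.2 ((span_range_eq_top_of_isFLinearBij hΦ).ge.trans (Submodule.span_mono ?_))
  rintro _ ⟨⟨x₀, x₁⟩, rfl⟩
  have h : (verschiebung 1 • x₀, x₁) ∈ standardP₁ p R L₀ L₁ :=
    ⟨Submodule.smul_mem_smul (mem_ker_constantCoeff_iff.2 ⟨1, rfl⟩) trivial, trivial⟩
  refine ⟨⟨_, h⟩, ?_⟩
  rw [standardF₁_mk he, one_smul, ← map_add, Prod.mk_add_mk, add_zero, zero_add]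

theorem standardF₁_verschiebung_smul
    (he : ∀ (ξ : WittVector p R) (x : L₀ × L₁), e (toFrobBase p R ξ ⊗ₜ x) = ξ • Φ x)
    (hΦsemi : ∀ (ξ : WittVector p R) (x : L₀ × L₁), Φ (ξ • x) = frobenius ξ • Φ x)
    (ξ : WittVector p R) (x : L₀ × L₁) (h : verschiebung ξ • x ∈ standardP₁ p R L₀ L₁) :
    standardF₁ e ⟨verschiebung ξ • x, h⟩ =
      ξ • (Φ (x.1, 0) + (p : WittVector p R) • Φ (0, x.2)) := by
  have hx : (0, verschiebung ξ • x.2) = verschiebung ξ • ((0 : L₀), x.2) := by simp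
  refine (standardF₁_mk he ξ x.1 (verschiebung ξ • x.2) h).trans ?_
  rw [hx, hΦsemi, frobenius_verschiebung, smul_add, mul_smul]

end WittVector

theorem stmt_14_general (p : ℕ) [Fact p.Prime] (R : Type) [CommRing R]
    (L₀ L₁ : Type) [AddCommGroup L₀] [AddCommGroup L₁]
    [Module (WittVector p R) L₀] [Module (WittVector p R) L₁]
    [Module.Finite (WittVector p R) L₀] [Module.Projective (WittVector p R) L₀]
    [Module.Finite (WittVector p R) L₁] [Module.Projective (WittVector p R) L₁]
    (Φ : (L₀ × L₁) →+ (L₀ × L₁))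
    (hΦsemi : ∀ (ξ : WittVector p R) (x : L₀ × L₁), Φ (ξ • x) = frobenius ξ • Φ x)
    (hΦbij : IsFLinearBij p R Φ)
    -- `I_R = ker w₀` and `P₁ = I_R L₀ ⊕ L₁ ⊆ P₀ = L₀ ⊕ L₁`:
    (IR : Ideal (WittVector p R)) (hIR : IR = RingHom.ker (constantCoeff (p := p)))
    (P₁ : Submodule (WittVector p R) (L₀ × L₁))
    (hP₁ : P₁ = (IR • (⊤ : Submodule (WittVector p R) L₀)).prod ⊤) :
    -- (i) I_R P₀ ⊆ P₁, with finite projective graded quotients: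
    (IR • (⊤ : Submodule (WittVector p R) (L₀ × L₁)) ≤ P₁) ∧
    Nonempty (((L₀ × L₁) ⧸ P₁) ≃ₗ[WittVector p R]
      (L₀ ⧸ (IR • (⊤ : Submodule (WittVector p R) L₀)))) ∧
    Nonempty ((P₁ ⧸ (Submodule.comap P₁.subtype
        (IR • (⊤ : Submodule (WittVector p R) (L₀ × L₁))))) ≃ₗ[WittVector p R]
      (L₁ ⧸ (IR • (⊤ : Submodule (WittVector p R) L₁)))) ∧
    Module.Finite (WittVector p R ⧸ IR)
      (L₀ ⧸ (IR • (⊤ : Submodule (WittVector p R) L₀))) ∧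
    Module.Projective (WittVector p R ⧸ IR)
      (L₀ ⧸ (IR • (⊤ : Submodule (WittVector p R) L₀))) ∧
    Module.Finite (WittVector p R ⧸ IR)
      (L₁ ⧸ (IR • (⊤ : Submodule (WittVector p R) L₁))) ∧
    Module.Projective (WittVector p R ⧸ IR)
      (L₁ ⧸ (IR • (⊤ : Submodule (WittVector p R) L₁))) ∧
    -- (ii), (iii): existence of the induced F₁, an f-linear epimorphism satisfying
    -- the Zink display axioms with respect to F₀(x) = Φ(x₀,0) + p Φ(0,x₁):
    ∃ F₁ : P₁ →+ (L₀ × L₁),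
      (∀ (ξ : WittVector p R) (x : P₁), F₁ (ξ • x) = frobenius ξ • F₁ x) ∧
      (∀ (ξ : WittVector p R) (x₀ : L₀) (x₁ : L₁)
        (hmem : ((verschiebung ξ : WittVector p R) • x₀, x₁) ∈ P₁),
        F₁ ⟨((verschiebung ξ : WittVector p R) • x₀, x₁), hmem⟩ =
          ξ • Φ (x₀, 0) + Φ (0, x₁)) ∧
      Submodule.span (WittVector p R) (Set.range F₁) = ⊤ ∧
      (∀ (ξ : WittVector p R) (x : L₀ × L₁)
        (hmem : (verschiebung ξ : WittVector p R) • x ∈ P₁),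
        F₁ ⟨(verschiebung ξ : WittVector p R) • x, hmem⟩ =
          ξ • (Φ (x.1, 0) + (p : WittVector p R) • Φ (0, x.2))) := by
  subst hP₁ hIR
  obtain ⟨e, he⟩ := hΦbij
  have he_tmul : ∀ (ξ : WittVector p R) x, e (toFrobBase p R ξ ⊗ₜ x) = ξ • Φ x := fun ξ => he _
  refine ⟨Submodule.smul_le.2 fun r hr _ _ => ⟨Submodule.smul_mem_smul hr trivial, trivial⟩,
    ⟨Submodule.quotientProdTopEquiv _⟩,
    ⟨(Submodule.quotEquivOfEq _ _ (by rw [Submodule.smul_top_prod])).trans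
      (Submodule.prodTopQuotientEquiv _ _)⟩,
    inferInstance, inferInstance, inferInstance, inferInstance,
    standardF₁ e.toAddMonoidHom, standardF₁_smul he_tmul, standardF₁_mk he_tmul,
    span_range_standardF₁ he_tmul ⟨e, he⟩, standardF₁_verschiebung_smul he_tmul hΦsemi⟩

/-- Let `R` be a `p`-adic ring, `(M, F)` a `1`-display over the Witt frame
given by a normal decomposition `L = L₀ ⊕ L₁` (finite projective `W(R)`-modules) and an
`f`-linear map `Φ = F|_L` whose linearization is bijective.  Set `P₀ = L₀ ⊕ L₁`,
`P₁ = I_R L₀ ⊕ L₁`, `F₀(x₀ + x₁) = Φ(x₀) + pΦ(x₁)` and let `F₁` be the induced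
`f`-linear map `P₁ → P₀` with `F₁(v(ξ)x₀ + x₁) = ξΦ(x₀) + Φ(x₁)`.  Then
`(P₀, P₁, F₀, F₁)` is a Zink display:
(i) `I_R P₀ ⊆ P₁ ⊆ P₀` with graded quotients `P₀/P₁ ≅ L₀ ⊗_{W(R)} R` and
    `P₁/I_R P₀ ≅ L₁ ⊗_{W(R)} R` finite projective over `R = W(R)/I_R`;
(ii) `F₁` is an `f`-linear epimorphism;
(iii) `F₁(v(ξ)·x) = ξ·F₀(x)` for all `ξ ∈ W(R)`, `x ∈ P₀`. -/
theorem stmt_14 (p : ℕ) [Fact p.Prime] (R : Type) [CommRing R]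
    (hR : IsAdicComplete (Ideal.span {(p : R)}) R)
    (L₀ L₁ : Type) [AddCommGroup L₀] [AddCommGroup L₁]
    [Module (WittVector p R) L₀] [Module (WittVector p R) L₁]
    [Module.Finite (WittVector p R) L₀] [Module.Projective (WittVector p R) L₀]
    [Module.Finite (WittVector p R) L₁] [Module.Projective (WittVector p R) L₁]
    (Φ : (L₀ × L₁) →+ (L₀ × L₁))
    (hΦsemi : ∀ (ξ : WittVector p R) (x : L₀ × L₁), Φ (ξ • x) = frobenius ξ • Φ x)
    (hΦbij : IsFLinearBij p R Φ)
    -- `I_R = ker w₀` and `P₁ = I_R L₀ ⊕ L₁ ⊆ P₀ = L₀ ⊕ L₁`: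
    (IR : Ideal (WittVector p R)) (hIR : IR = RingHom.ker (constantCoeff (p := p)))
    (P₁ : Submodule (WittVector p R) (L₀ × L₁))
    (hP₁ : P₁ = (IR • (⊤ : Submodule (WittVector p R) L₀)).prod ⊤) :
    -- (i) I_R P₀ ⊆ P₁, with finite projective graded quotients:
    (IR • (⊤ : Submodule (WittVector p R) (L₀ × L₁)) ≤ P₁) ∧
    Nonempty (((L₀ × L₁) ⧸ P₁) ≃ₗ[WittVector p R]
      (L₀ ⧸ (IR • (⊤ : Submodule (WittVector p R) L₀)))) ∧
    Nonempty ((P₁ ⧸ (Submodule.comap P₁.subtype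
        (IR • (⊤ : Submodule (WittVector p R) (L₀ × L₁))))) ≃ₗ[WittVector p R]
      (L₁ ⧸ (IR • (⊤ : Submodule (WittVector p R) L₁)))) ∧
    Module.Finite (WittVector p R ⧸ IR)
      (L₀ ⧸ (IR • (⊤ : Submodule (WittVector p R) L₀))) ∧
    Module.Projective (WittVector p R ⧸ IR)
      (L₀ ⧸ (IR • (⊤ : Submodule (WittVector p R) L₀))) ∧
    Module.Finite (WittVector p R ⧸ IR)
      (L₁ ⧸ (IR • (⊤ : Submodule (WittVector p R) L₁))) ∧
    Module.Projective (WittVector p R ⧸ IR)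
      (L₁ ⧸ (IR • (⊤ : Submodule (WittVector p R) L₁))) ∧
    -- (ii), (iii): existence of the induced F₁, an f-linear epimorphism satisfying
    -- the Zink display axioms with respect to F₀(x) = Φ(x₀,0) + p Φ(0,x₁):
    ∃ F₁ : P₁ →+ (L₀ × L₁),
      (∀ (ξ : WittVector p R) (x : P₁), F₁ (ξ • x) = frobenius ξ • F₁ x) ∧
      (∀ (ξ : WittVector p R) (x₀ : L₀) (x₁ : L₁)
        (hmem : ((verschiebung ξ : WittVector p R) • x₀, x₁) ∈ P₁),
        F₁ ⟨((verschiebung ξ : WittVector p R) • x₀, x₁), hmem⟩ =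
          ξ • Φ (x₀, 0) + Φ (0, x₁)) ∧
      Submodule.span (WittVector p R) (Set.range F₁) = ⊤ ∧
      (∀ (ξ : WittVector p R) (x : L₀ × L₁)
        (hmem : (verschiebung ξ : WittVector p R) • x ∈ P₁),
        F₁ ⟨(verschiebung ξ : WittVector p R) • x, hmem⟩ =
          ξ • (Φ (x.1, 0) + (p : WittVector p R) • Φ (0, x.2))) :=
  stmt_14_general p R L₀ L₁ Φ hΦsemi hΦbij IR hIR P₁ hP₁
end

section
/- Let R be a p-adic ring, and let M, M' be finite projective graded W(R)^⊕-modules of non-negative depth and altitude at most one. The functor M ↦ (M^τ, θ_1(M_1)), sending such a module to the pair consisting of the finite projective W(R)-module M^τ together with its submodule θ_1(M_1), is fully faithful: every W(R)-module homomorphism M^τ → (M')^τ carrying θ_1(M_1) into θ_1'(M_1') is induced by a unique graded W(R)^⊕-module homomorphism M → M'. -/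
open WittVector

/-- A witness that the `ℤ`-graded ring `S` "is" the graded Witt frame ring `W(R)^⊕` of
Lau–Daniels: degreewise additive realizations `ε n : S → W(R)` which are bijective from
`S₀` onto `W(R)`, from `S₋ₙ` onto `W(R)` (via division by `tⁿ`), and from `Sₙ` (`n ≥ 1`)
onto `I_R = ker w₀`, together with the element `t ∈ S₋₁` and the multiplication rules of
the Witt frame (`v(a)·v(b) = v(ab)` in positive degrees, `W(R)`-module structure in each
degree, `t` acting as the inclusion `I_R ⊆ W(R)` from degree `1` to degree `0` and as
multiplication by `p` in higher degrees), and the frame homomorphisms `σ` and `τ`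
matching the Witt Frobenius and the canonical maps. -/
structure WittFrameData (p : ℕ) [Fact p.Prime] (R : Type*) [CommRing R]
    (S : Type*) [CommRing S] (𝒜 : ℤ → AddSubgroup S) [GradedRing 𝒜] where
  ε : ℤ → S →+ WittVector p R
  bij_zero : Set.BijOn (ε 0) ((𝒜 0 : AddSubgroup S) : Set S) Set.univ
  map_one : ε 0 1 = 1
  map_mul_zero : ∀ x ∈ 𝒜 0, ∀ y ∈ 𝒜 0, ε 0 (x * y) = ε 0 x * ε 0 y
  bij_neg : ∀ n : ℕ, Set.BijOn (ε (-(n : ℤ))) ((𝒜 (-(n : ℤ)) : AddSubgroup S) : Set S) Set.univ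
  bij_pos : ∀ n : ℕ, 1 ≤ n → Set.BijOn (ε (n : ℤ)) ((𝒜 (n : ℤ) : AddSubgroup S) : Set S)
      {w : WittVector p R | constantCoeff w = 0}
  t : S
  t_mem : t ∈ 𝒜 (-1)
  εt : ε (-1) t = 1
  t_mul : ∀ m : ℤ, ∀ x ∈ 𝒜 m, ε (m - 1) (t * x) =
      (if 2 ≤ m then (p : WittVector p R) * ε m x else ε m x)
  smul_zero_deg : ∀ a ∈ 𝒜 0, ∀ (m : ℤ), ∀ x ∈ 𝒜 m, ε m (a * x) = ε 0 a * ε m x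
  pos_mul : ∀ (m n : ℕ), 1 ≤ m → 1 ≤ n → ∀ x ∈ 𝒜 (m : ℤ), ∀ y ∈ 𝒜 (n : ℤ),
      ∀ a b : WittVector p R, ε (m : ℤ) x = verschiebung a → ε (n : ℤ) y = verschiebung b →
        ε ((m : ℤ) + n) (x * y) = verschiebung (a * b)
  σ : S →+* S
  τ : S →+* S
  σ_mem : ∀ s : S, σ s ∈ 𝒜 0
  τ_mem : ∀ s : S, τ s ∈ 𝒜 0
  τ_spec : ∀ m : ℤ, ∀ x ∈ 𝒜 m, ε 0 (τ x) =
      (if 1 ≤ m then (p : WittVector p R) ^ (m.toNat - 1) * ε m x else ε m x)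
  σ_spec_zero : ∀ x ∈ 𝒜 0, ε 0 (σ x) = frobenius (ε 0 x)
  σ_spec_pos : ∀ n : ℕ, 1 ≤ n → ∀ x ∈ 𝒜 (n : ℤ), verschiebung (ε 0 (σ x)) = ε (n : ℤ) x
  σ_spec_neg : ∀ n : ℕ, ∀ x ∈ 𝒜 (-(n : ℤ)),
      ε 0 (σ x) = (p : WittVector p R) ^ n * frobenius (ε (-(n : ℤ)) x)

/-!
Write `θₙ : Mₙ → M^τ = M/(t - 1)M`. In the Witt frame, `t : Sₘ → Sₘ₋₁` is injective for `m ≤ 1`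
and bijective for `m ≤ 0`. Since `M` is a direct summand of the cover `(S ⊗ L₀) × (S ⊗ L₁)` with
`L₁` in degree `1`, flatness of the `Lᵢ` makes `t` injective on `Mₙ` for `n ≤ 1`, and it is onto
`Mₙ` for `n ≤ -1`. The first fact gives injectivity of `θₙ` for `n ≤ 1` (a relation
`x = (t - 1)y` propagates along the finitely many components of `y`), the second surjectivity
of `θ₀`. Applied to `M'`, they let `g` lift uniquely to `S₀`-linear maps `L₀ → M'₀` (through
`θ'₀`) and `L₁ → M'₁` (through `θ'₁`, by the hypothesis on `M₁`). These extend to the cover, and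
the degree-preserving part of the composite with a section is the required graded map. It is
unique because a graded map is determined on `L₀ ∪ L₁`, where `θ'₀` and `θ'₁` are injective.
-/

open DirectSum TensorProduct

namespace WittFrameData

variable {p : ℕ} [Fact p.Prime] {R : Type*} [CommRing R] {S : Type*} [CommRing S]
  {𝒜 : ℤ → AddSubgroup S} [GradedRing 𝒜] (W : WittFrameData p R S 𝒜)

lemma ε_injOn (n : ℤ) : Set.InjOn (W.ε n) (𝒜 n) := by
  obtain ⟨k, rfl | rfl⟩ := Int.eq_nat_or_neg n
  · rcases k.eq_zero_or_pos with rfl | hk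
    · exact W.bij_zero.injOn
    · exact (W.bij_pos k hk).injOn
  · exact (W.bij_neg k).injOn

lemma t_mul_mem {m : ℤ} {x : S} (hx : x ∈ 𝒜 m) : W.t * x ∈ 𝒜 (m - 1) := by
  simpa [neg_add_eq_sub] using SetLike.mul_mem_graded W.t_mem hx

lemma ε_t_mul {m : ℤ} (hm : m ≤ 1) {x : S} (hx : x ∈ 𝒜 m) :
    W.ε (m - 1) (W.t * x) = W.ε m x := by
  simpa [if_neg (show ¬ 2 ≤ m by omega)] using W.t_mul m x hx

lemma eq_zero_of_t_mul_eq_zero : ∀ m ≤ 1, ∀ x ∈ 𝒜 m, W.t * x = 0 → x = 0 := fun m hm x hx h =>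
  W.ε_injOn m hx (zero_mem _) (by rw [← W.ε_t_mul hm hx, h, map_zero, map_zero])

lemma exists_t_mul_eq : ∀ m ≤ -1, ∀ x ∈ 𝒜 m, ∃ y ∈ 𝒜 (m + 1), W.t * y = x := by
  intro m hm x hx
  obtain ⟨k, hk⟩ : ∃ k : ℕ, m + 1 = -(k : ℤ) := ⟨(-(m + 1)).toNat, by omega⟩
  obtain ⟨y, hy, hyx⟩ := (W.bij_neg k).surjOn (Set.mem_univ (W.ε m x))
  rw [← hk] at hy hyx
  have hty : W.t * y ∈ 𝒜 m := by simpa using W.t_mul_mem hy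
  refine ⟨y, hy, W.ε_injOn m hty hx ?_⟩
  rw [← hyx, ← W.ε_t_mul (by omega) hy, add_sub_cancel_right]

end WittFrameData

section GradedPart

variable {M M' : Type*} [AddCommGroup M] [AddCommGroup M'] (ℳ : ℤ → AddSubgroup M)
  (ℳ' : ℤ → AddSubgroup M') [Decomposition ℳ] [Decomposition ℳ']

def AddMonoidHom.gradedPart (h : M →+ M') : M →+ M' :=
  (DirectSum.toAddMonoid fun n =>
    (AddMonoidHom.mk' (fun x : ℳ n => (decompose ℳ' (h x) n : M')) fun x y => by
      simp [decompose_add])).comp (decomposeAddEquiv ℳ).toAddMonoidHom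

lemma AddMonoidHom.gradedPart_apply_of_mem (h : M →+ M') {n : ℤ} {x : M} (hx : x ∈ ℳ n) :
    h.gradedPart ℳ ℳ' x = decompose ℳ' (h x) n := by
  show DirectSum.toAddMonoid _ (decompose ℳ x) = _
  rw [decompose_of_mem ℳ hx, toAddMonoid_of]
  rfl

lemma exists_decompose_eq_zero_of_lt_abs (y : M) :
    ∃ B : ℤ, ∀ m, B < |m| → (decompose ℳ y m : M) = 0 := by
  classical
  obtain ⟨B, hB⟩ := ((decompose ℳ y).support.image (fun m => |m|)).exists_le
  refine ⟨B, fun m hm => ?_⟩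
  by_contra hne
  exact hm.not_ge
    (hB _ (Finset.mem_image_of_mem _ (DFinsupp.mem_support_iff.2 (by simpa using hne))))

end GradedPart

section GradedModule

variable {S : Type*} [CommRing S] (𝒜 : ℤ → AddSubgroup S)
  {M : Type*} [AddCommGroup M] [Module S M] (ℳ : ℤ → AddSubgroup M) [SetLike.GradedSMul 𝒜 ℳ]

variable {𝒜} in
lemma SetLike.smul_mem_graded {i j : ℤ} {s : S} {x : M} (hs : s ∈ 𝒜 i) (hx : x ∈ ℳ j) :
    s • x ∈ ℳ (i + j) :=
  SetLike.GradedSMul.smul_mem hs hx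

variable [Decomposition ℳ]

variable {𝒜} in
lemma coe_decompose_smul_add_of_left_mem {k : ℤ} {a : S} (ha : a ∈ 𝒜 k) (x : M) (n : ℤ) :
    (decompose ℳ (a • x) (k + n) : M) = a • (decompose ℳ x n : M) := by
  induction x using Decomposition.inductionOn ℳ with
  | zero => simp
  | @homogeneous m y =>
    rcases eq_or_ne m n with rfl | hne
    · rw [decompose_of_mem_same ℳ y.2,
        decompose_of_mem_same ℳ (SetLike.smul_mem_graded ℳ ha y.2)]
    · rw [decompose_of_mem_ne ℳ y.2 hne,
        decompose_of_mem_ne ℳ (SetLike.smul_mem_graded ℳ ha y.2) (by omega), smul_zero]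
  | add y z hy hz =>
    simp only [smul_add, decompose_add, DirectSum.add_apply, AddSubgroup.coe_add, hy, hz]

variable [GradedRing 𝒜]

lemma coe_decompose_smul_of_right_mem_s19 {j : ℤ} {x : M} (hx : x ∈ ℳ j) (s : S) (n : ℤ) :
    (decompose ℳ (s • x) n : M) = (decompose 𝒜 s (n - j) : S) • x := by
  induction s using Decomposition.inductionOn 𝒜 with
  | zero => simp
  | @homogeneous k a =>
    rcases eq_or_ne k (n - j) with rfl | hne
    · rw [decompose_of_mem_same 𝒜 a.2,
        decompose_of_mem_same ℳ (by simpa using SetLike.smul_mem_graded ℳ a.2 hx)]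
    · rw [decompose_of_mem_ne 𝒜 a.2 hne,
        decompose_of_mem_ne ℳ (SetLike.smul_mem_graded ℳ a.2 hx) (by omega), zero_smul]
  | add a b ha hb =>
    simp only [add_smul, decompose_add, DirectSum.add_apply, AddSubgroup.coe_add, ha, hb]

variable {M' : Type*} [AddCommGroup M'] [Module S M'] (ℳ' : ℤ → AddSubgroup M')
  [Decomposition ℳ'] [SetLike.GradedSMul 𝒜 ℳ']

def LinearMap.gradedPart (h : M →ₗ[S] M') : M →ₗ[S] M' where
  __ := h.toAddMonoidHom.gradedPart ℳ ℳ'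
  map_smul' s x := by
    induction s using Decomposition.inductionOn 𝒜 with
    | zero => simp
    | @homogeneous k a =>
      induction x using Decomposition.inductionOn ℳ with
      | zero => simp
      | @homogeneous n y =>
        simp only [AddMonoidHom.toFun_eq_coe, RingHom.id_apply]
        rw [AddMonoidHom.gradedPart_apply_of_mem _ _ _ (SetLike.smul_mem_graded ℳ a.2 y.2),
          AddMonoidHom.gradedPart_apply_of_mem _ _ _ y.2, LinearMap.toAddMonoidHom_coe,
          map_smul, coe_decompose_smul_add_of_left_mem ℳ' a.2]
      | add y z hy hz => simp_all [smul_add]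
    | add a b ha hb => simp_all [add_smul]

lemma LinearMap.gradedPart_apply_of_mem (h : M →ₗ[S] M') {n : ℤ} {x : M} (hx : x ∈ ℳ n) :
    h.gradedPart 𝒜 ℳ ℳ' x = decompose ℳ' (h x) n :=
  h.toAddMonoidHom.gradedPart_apply_of_mem ℳ ℳ' hx

lemma LinearMap.gradedPart_mem (h : M →ₗ[S] M') {n : ℤ} {x : M} (hx : x ∈ ℳ n) :
    h.gradedPart 𝒜 ℳ ℳ' x ∈ ℳ' n := by
  rw [h.gradedPart_apply_of_mem 𝒜 ℳ ℳ' hx]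
  exact SetLike.coe_mem _

end GradedModule

section Tensor

variable {S : Type*} [CommRing S] (𝒜 : ℤ → AddSubgroup S) [GradedRing 𝒜]

def gradeSubmodule (n : ℤ) : Submodule (gradeZero 𝒜) S where
  carrier := 𝒜 n
  add_mem' := add_mem
  zero_mem' := zero_mem _
  smul_mem' a _ hx := by
    simpa [Subring.smul_def] using SetLike.mul_mem_graded (show (a : S) ∈ 𝒜 0 from a.2) hx

def gradeProj (n : ℤ) : S →ₗ[gradeZero 𝒜] gradeSubmodule 𝒜 n where
  toFun s := ⟨decompose 𝒜 s n, SetLike.coe_mem _⟩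
  map_add' x y := by ext; simp [decompose_add]
  map_smul' a s := by
    ext
    simpa [Subring.smul_def] using
      coe_decompose_mul_of_left_mem_zero 𝒜 (b := s) (j := n) (show (a : S) ∈ 𝒜 0 from a.2)

variable (N : Type*) [AddCommGroup N] [Module (gradeZero 𝒜) N]

def tensorProj (n : ℤ) : S ⊗[gradeZero 𝒜] N →ₗ[gradeZero 𝒜] S ⊗[gradeZero 𝒜] N :=
  ((gradeSubmodule 𝒜 n).subtype ∘ₗ gradeProj 𝒜 n).rTensor N

variable {𝒜 N}

lemma tensorProj_tmul (n : ℤ) (s : S) (y : N) :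
    tensorProj 𝒜 N n (s ⊗ₜ y) = (decompose 𝒜 s n : S) ⊗ₜ y := rfl

lemma tensorProj_smul_add {a : S} {k : ℤ} (ha : a ∈ 𝒜 k) (n : ℤ) (v : S ⊗[gradeZero 𝒜] N) :
    tensorProj 𝒜 N (k + n) (a • v) = a • tensorProj 𝒜 N n v := by
  induction v using TensorProduct.induction_on with
  | zero => simp
  | tmul s y =>
    rw [smul_tmul', tensorProj_tmul, tensorProj_tmul, smul_tmul', smul_eq_mul,
      coe_decompose_mul_add_of_left_mem 𝒜 ha, smul_eq_mul]
  | add v w hv hw => simp only [smul_add, map_add, hv, hw]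

lemma tensorProj_eq_zero_of_smul_eq_zero [Module.Flat (gradeZero 𝒜) N] {a : S} {n : ℤ}
    (hinj : ∀ x ∈ 𝒜 n, a * x = 0 → x = 0) (v : S ⊗[gradeZero 𝒜] N)
    (h : a • tensorProj 𝒜 N n v = 0) : tensorProj 𝒜 N n v = 0 := by
  have hmul : Function.Injective (Algebra.lsmul (gradeZero 𝒜) (gradeZero 𝒜) S a ∘ₗ
      (gradeSubmodule 𝒜 n).subtype) := by
    rw [← LinearMap.ker_eq_bot, LinearMap.ker_eq_bot']
    exact fun x hx => Subtype.ext (hinj x x.2 hx)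
  have hw : ((Algebra.lsmul (gradeZero 𝒜) (gradeZero 𝒜) S a ∘ₗ
      (gradeSubmodule 𝒜 n).subtype).rTensor N) ((gradeProj 𝒜 n).rTensor N v) = 0 := by
    rwa [LinearMap.rTensor_comp_apply, ← LinearMap.rTensor_comp_apply N (f := gradeProj 𝒜 n),
      ← AlgebraTensorModule.smul_eq_lsmul_rTensor]
  rw [tensorProj, LinearMap.rTensor_comp_apply,
    Module.Flat.rTensor_preserves_injective_linearMap _ hmul (hw.trans (map_zero _).symm),
    map_zero]

end Tensor

section Cover

variable {S : Type*} [CommRing S] {𝒜 : ℤ → AddSubgroup S} [GradedRing 𝒜]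
  {M : Type*} [AddCommGroup M] [Module S M] (ℳ : ℤ → AddSubgroup M) [Decomposition ℳ]
  [SetLike.GradedSMul 𝒜 ℳ]
  {N N₀ N₁ : Type*} [AddCommGroup N] [Module (gradeZero 𝒜) N]
  [AddCommGroup N₀] [Module (gradeZero 𝒜) N₀] [AddCommGroup N₁] [Module (gradeZero 𝒜) N₁]

lemma coe_decompose_liftBaseChange {d : ℤ} {f : N →ₗ[gradeZero 𝒜] M} (hf : ∀ y, f y ∈ ℳ d)
    (v : S ⊗[gradeZero 𝒜] N) (n : ℤ) :
    (decompose ℳ (f.liftBaseChange S v) n : M) =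
      f.liftBaseChange S (tensorProj 𝒜 N (n - d) v) := by
  induction v using TensorProduct.induction_on with
  | zero => simp
  | tmul s y =>
    rw [tensorProj_tmul, LinearMap.liftBaseChange_tmul, LinearMap.liftBaseChange_tmul,
      coe_decompose_smul_of_right_mem_s19 𝒜 ℳ (hf y)]
  | add v w hv hw =>
    simp only [map_add, decompose_add, DirectSum.add_apply, AddSubgroup.coe_add, hv, hw]

variable (𝒜 N₀ N₁) in
/-- Degree-`n` projection of `(S ⊗[S₀] N₀) × (S ⊗[S₀] N₁)`, with `N₀` placed in degree `0` and
`N₁` in degree `1`. -/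
def coverProj (n : ℤ) :
    (S ⊗[gradeZero 𝒜] N₀) × (S ⊗[gradeZero 𝒜] N₁) →ₗ[gradeZero 𝒜]
      (S ⊗[gradeZero 𝒜] N₀) × (S ⊗[gradeZero 𝒜] N₁) :=
  (tensorProj 𝒜 N₀ n).prodMap (tensorProj 𝒜 N₁ (n - 1))

def coverMap (f₀ : N₀ →ₗ[gradeZero 𝒜] M) (f₁ : N₁ →ₗ[gradeZero 𝒜] M) :
    (S ⊗[gradeZero 𝒜] N₀) × (S ⊗[gradeZero 𝒜] N₁) →ₗ[S] M :=
  (f₀.liftBaseChange S).coprod (f₁.liftBaseChange S)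

lemma coe_decompose_coverMap {f₀ : N₀ →ₗ[gradeZero 𝒜] M} {f₁ : N₁ →ₗ[gradeZero 𝒜] M}
    (hf₀ : ∀ y, f₀ y ∈ ℳ 0) (hf₁ : ∀ y, f₁ y ∈ ℳ 1) (u) (n : ℤ) :
    (decompose ℳ (coverMap f₀ f₁ u) n : M) = coverMap f₀ f₁ (coverProj 𝒜 N₀ N₁ n u) := by
  simp only [coverMap, coverProj, LinearMap.coprod_apply, LinearMap.prodMap_apply, decompose_add,
    DirectSum.add_apply, AddSubgroup.coe_add, coe_decompose_liftBaseChange ℳ hf₀,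
    coe_decompose_liftBaseChange ℳ hf₁, sub_zero]

lemma coverProj_smul_add {a : S} {k : ℤ} (ha : a ∈ 𝒜 k) (n : ℤ) (u) :
    coverProj 𝒜 N₀ N₁ (k + n) (a • u) = a • coverProj 𝒜 N₀ N₁ n u := by
  simp only [coverProj, LinearMap.prodMap_apply, Prod.smul_fst, Prod.smul_snd, Prod.smul_mk,
    ← tensorProj_smul_add ha, add_sub_assoc]

lemma coverProj_eq_zero_of_smul_eq_zero
    [Module.Flat (gradeZero 𝒜) N₀] [Module.Flat (gradeZero 𝒜) N₁]
    {a : S} (hinj : ∀ m ≤ 1, ∀ x ∈ 𝒜 m, a * x = 0 → x = 0) {n : ℤ} (hn : n ≤ 1) (u)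
    (h : a • coverProj 𝒜 N₀ N₁ n u = 0) : coverProj 𝒜 N₀ N₁ n u = 0 := by
  rw [Prod.ext_iff] at h ⊢
  exact ⟨tensorProj_eq_zero_of_smul_eq_zero (hinj n hn) _ h.1,
    tensorProj_eq_zero_of_smul_eq_zero (hinj (n - 1) (by omega)) _ h.2⟩

lemma comp_coverMap {X : Type*} [AddCommGroup X] [Module S X] (h : M →ₗ[S] X)
    (f₀ : N₀ →ₗ[gradeZero 𝒜] M) (f₁ : N₁ →ₗ[gradeZero 𝒜] M) :
    h ∘ₗ coverMap f₀ f₁ =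
      coverMap (h.restrictScalars (gradeZero 𝒜) ∘ₗ f₀)
        (h.restrictScalars (gradeZero 𝒜) ∘ₗ f₁) := by
  rw [coverMap, coverMap, LinearMap.comp_coprod, LinearMap.liftBaseChange_comp,
    LinearMap.liftBaseChange_comp]

lemma range_coverMap (f₀ : N₀ →ₗ[gradeZero 𝒜] M) (f₁ : N₁ →ₗ[gradeZero 𝒜] M) :
    LinearMap.range (coverMap f₀ f₁) =
      Submodule.span S (Set.range f₀ ∪ Set.range f₁) := by
  rw [coverMap, LinearMap.range_coprod, LinearMap.range_liftBaseChange,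
    LinearMap.range_liftBaseChange, Submodule.span_union, LinearMap.coe_range, LinearMap.coe_range]

end Cover

section NormalDecomposition

variable {S : Type*} [CommRing S] {𝒜 : ℤ → AddSubgroup S} [GradedRing 𝒜]
  {M : Type*} [AddCommGroup M] [Module S M] {ℳ : ℤ → AddSubgroup M}

/-- A normal decomposition of depth `≥ 0` and altitude `≤ 1`, in the weak form
`ℳₙ = S_n • L₀ + S_{n-1} • L₁`. -/
structure IsNormalDecomposition (ℳ : ℤ → AddSubgroup M) (L : ℤ → Submodule (gradeZero 𝒜) M) :
    Prop where
  subset : ∀ i, (L i : Set M) ⊆ ℳ i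
  eq_bot : ∀ i, i ≠ 0 → i ≠ 1 → L i = ⊥
  closure_eq : ∀ n, ℳ n =
    AddSubgroup.closure {m : M | ∃ i : ℤ, ∃ s ∈ 𝒜 (n - i), ∃ x ∈ L i, m = s • x}

namespace IsNormalDecomposition

variable {L : ℤ → Submodule (gradeZero 𝒜) M} (hL : IsNormalDecomposition ℳ L)
include hL

lemma le_of_smul_mem {K : AddSubgroup M} {n : ℤ}
    (h₀ : ∀ s ∈ 𝒜 n, ∀ x ∈ L 0, s • x ∈ K) (h₁ : ∀ s ∈ 𝒜 (n - 1), ∀ x ∈ L 1, s • x ∈ K) :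
    ℳ n ≤ K := by
  rw [hL.closure_eq n, AddSubgroup.closure_le]
  rintro _ ⟨i, s, hs, x, hx, rfl⟩
  by_cases hi₀ : i = 0
  · subst hi₀; exact h₀ s (by simpa using hs) x hx
  by_cases hi₁ : i = 1
  · subst hi₁; exact h₁ s hs x hx
  rw [hL.eq_bot i hi₀ hi₁, Submodule.mem_bot] at hx
  simp [hx]

lemma exists_t_smul_eq [SetLike.GradedSMul 𝒜 ℳ] {t : S}
    (hsurj : ∀ m ≤ -1, ∀ x ∈ 𝒜 m, ∃ y ∈ 𝒜 (m + 1), t * y = x) :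
    ∀ n ≤ -1, ∀ x ∈ ℳ n, ∃ z ∈ ℳ (n + 1), t • z = x := by
  intro n hn x hx
  suffices ℳ n ≤ (ℳ (n + 1)).map (DistribSMul.toAddMonoidHom M t) by
    simpa using this hx
  have key : ∀ i, 0 ≤ i → ∀ s ∈ 𝒜 (n - i), ∀ y ∈ L i,
      s • y ∈ (ℳ (n + 1)).map (DistribSMul.toAddMonoidHom M t) := by
    intro i hi s hs y hy
    obtain ⟨s', hs', rfl⟩ := hsurj _ (by omega) s hs
    refine ⟨s' • y, ?_, smul_smul t s' y⟩
    have := SetLike.smul_mem_graded ℳ hs' (hL.subset i hy)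
    rwa [show n - i + 1 + i = n + 1 by ring] at this
  exact hL.le_of_smul_mem (by simpa using key 0 le_rfl) (key 1 zero_le_one)

variable [Decomposition ℳ]

lemma span_eq_top : Submodule.span S ((L 0 : Set M) ∪ L 1) = ⊤ := by
  rw [Submodule.eq_top_iff']
  intro m
  induction m using Decomposition.inductionOn ℳ with
  | zero => exact zero_mem _
  | @homogeneous n x =>
    refine (hL.le_of_smul_mem (K := (Submodule.span S _).toAddSubgroup) ?_ ?_) x.2 <;>
      exact fun s _ y hy => Submodule.smul_mem _ s (Submodule.subset_span (by simp [hy]))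
  | add x y hx hy => exact add_mem hx hy

lemma coverMap_surjective : Function.Surjective (coverMap (L 0).subtype (L 1).subtype) := by
  rw [← LinearMap.range_eq_top, range_coverMap]
  simpa using hL.span_eq_top

variable [SetLike.GradedSMul 𝒜 ℳ] {t : S}

lemma eq_zero_of_t_smul_eq_zero [Module.Projective S M]
    [Module.Flat (gradeZero 𝒜) (L 0)] [Module.Flat (gradeZero 𝒜) (L 1)] (ht : t ∈ 𝒜 (-1))
    (hinj : ∀ m ≤ 1, ∀ x ∈ 𝒜 m, t * x = 0 → x = 0) : ∀ n ≤ 1, ∀ x ∈ ℳ n, t • x = 0 → x = 0 := by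
  intro n hn x hx h
  obtain ⟨j, hj⟩ := Module.projective_lifting_property _ LinearMap.id hL.coverMap_surjective
  have hx' : coverMap (L 0).subtype (L 1).subtype (coverProj 𝒜 (L 0) (L 1) n (j x)) = x := by
    rw [← coe_decompose_coverMap ℳ (fun y => hL.subset 0 y.2) (fun y => hL.subset 1 y.2),
      ← LinearMap.comp_apply, hj, LinearMap.id_apply, decompose_of_mem_same ℳ hx]
  have htu : t • coverProj 𝒜 (L 0) (L 1) n (j x) = 0 := by
    rw [← coverProj_smul_add ht, ← map_smul, h, map_zero, map_zero]
  rw [← hx', coverProj_eq_zero_of_smul_eq_zero hinj hn _ htu, map_zero]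

end IsNormalDecomposition

end NormalDecomposition

/-- `(t - 1)M`. For the Witt frame, `M ⧸ tauKernel W.t M` is `M^τ = M ⊗_{W(R)^⊕, τ} W(R)`. -/
abbrev tauKernel {S : Type*} [CommRing S] (t : S) (M : Type*) [AddCommGroup M] [Module S M] :
    Submodule S M :=
  Ideal.span {t - 1} • ⊤

lemma mk_t_smul {S : Type*} [CommRing S] {t : S} {M : Type*} [AddCommGroup M] [Module S M]
    (z : M) : (Submodule.Quotient.mk (t • z) : M ⧸ tauKernel t M) = Submodule.Quotient.mk z := by
  rw [Submodule.Quotient.eq, show t • z - z = (t - 1) • z by rw [sub_smul, one_smul]]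
  exact Submodule.smul_mem_smul (Ideal.mem_span_singleton_self _) trivial

section Tau

open Pointwise

variable {S : Type*} [CommRing S] {𝒜 : ℤ → AddSubgroup S}
  {M : Type*} [AddCommGroup M] [Module S M] {ℳ : ℤ → AddSubgroup M} [Decomposition ℳ]
  [SetLike.GradedSMul 𝒜 ℳ] {t : S}

lemma exists_mem_zero_mk_eq (ht : t ∈ 𝒜 (-1))
    (hsurj : ∀ n ≤ -1, ∀ x ∈ ℳ n, ∃ z ∈ ℳ (n + 1), t • z = x) (m : M) :
    ∃ x ∈ ℳ 0, (Submodule.Quotient.mk x : M ⧸ tauKernel t M) = Submodule.Quotient.mk m := by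
  let mk := (tauKernel t M).mkQ.toAddMonoidHom
  let T : AddSubgroup M := ((ℳ 0).map mk).comap mk
  have hT : ∀ z, z ∈ T ↔ ∃ x ∈ ℳ 0, (Submodule.Quotient.mk x : M ⧸ tauKernel t M) =
      Submodule.Quotient.mk z := fun z => Iff.rfl
  have hgr : ∀ n, ℳ n ≤ T := by
    intro n
    induction n using Int.inductionOn' (b := 0) with
    | zero => exact fun x hx => (hT x).2 ⟨x, hx, rfl⟩
    | succ k hk ih =>
      intro z hz
      obtain ⟨x, hx, hxz⟩ := (hT _).1 (ih (by simpa using SetLike.smul_mem_graded ℳ ht hz))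
      exact (hT z).2 ⟨x, hx, hxz.trans (mk_t_smul z)⟩
    | pred k hk ih =>
      intro z hz
      obtain ⟨w, hw, rfl⟩ := hsurj _ (by omega) z hz
      obtain ⟨x, hx, hxw⟩ := (hT _).1 (ih (by simpa using hw))
      exact (hT _).2 ⟨x, hx, hxw.trans (mk_t_smul w).symm⟩
  refine (hT m).1 ?_
  induction m using Decomposition.inductionOn ℳ with
  | zero => exact zero_mem T
  | homogeneous x => exact hgr _ x.2
  | add x y hx hy => exact add_mem hx hy

/-- Write `x = (t - 1) • y`. Away from degree `n` the components satisfy `yₘ = t • yₘ₊₁`; as `y` has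
finite support this kills `yₘ` for `m > n`, and, `t` being injective in degrees `≤ 1`, also `yₙ`.
Hence `x = t • yₙ₊₁ - yₙ = 0`. -/
lemma eq_zero_of_mem_tauKernel (ht : t ∈ 𝒜 (-1))
    (hinj : ∀ n ≤ 1, ∀ x ∈ ℳ n, t • x = 0 → x = 0) {n : ℤ} (hn : n ≤ 1) {x : M}
    (hx : x ∈ ℳ n) (h : x ∈ tauKernel t M) : x = 0 := by
  rw [tauKernel, Submodule.ideal_span_singleton_smul] at h
  obtain ⟨y, -, hy⟩ := h
  replace hy : (t - 1) • y = x := hy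
  subst hy
  set Y : ℤ → M := fun m => decompose ℳ y m
  have hcomp : ∀ m, (decompose ℳ ((t - 1) • y) m : M) = t • Y (m + 1) - Y m := by
    intro m
    have ht_comp := coe_decompose_smul_add_of_left_mem ℳ ht y (m + 1)
    rw [show -1 + (m + 1) = m by ring] at ht_comp
    rw [sub_smul, one_smul, decompose_sub, DirectSum.sub_apply, AddSubgroup.coe_sub, ht_comp]
  have hstep : ∀ m ≠ n, Y m = t • Y (m + 1) := fun m hm => by
    rw [eq_comm, ← sub_eq_zero, ← hcomp, decompose_of_mem_ne ℳ hx hm.symm]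
  obtain ⟨B, hY⟩ := exists_decompose_eq_zero_of_lt_abs ℳ y
  have hup : ∀ k : ℕ, Y (n + 1 + k) = 0 → Y (n + 1) = 0 := by
    intro k
    induction k with
    | zero => simp
    | succ k ih =>
      intro hk
      refine ih ?_
      rw [hstep _ (by omega), show n + 1 + k + 1 = n + 1 + (k + 1 : ℕ) by push_cast; ring, hk,
        smul_zero]
  have hdown : ∀ k : ℕ, Y (n - k) = 0 → Y n = 0 := by
    intro k
    induction k with
    | zero => simp
    | succ k ih =>
      intro hk
      refine ih (hinj _ (by omega) _ (SetLike.coe_mem _) ?_)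
      rwa [show n - k = n - (k + 1 : ℕ) + 1 by push_cast; ring, ← hstep _ (by omega)]
  have hYn : Y n = 0 := hdown (n + B + 1).toNat (hY _ (by rw [lt_abs]; omega))
  have hYn1 : Y (n + 1) = 0 := hup (B - n).toNat (hY _ (by rw [lt_abs]; omega))
  rw [← decompose_of_mem_same ℳ hx, hcomp, hYn, hYn1, smul_zero, sub_zero]

end Tau

section FullyFaithful

variable {S : Type*} [CommRing S] {𝒜 : ℤ → AddSubgroup S} [GradedRing 𝒜] {t : S}
  {M : Type*} [AddCommGroup M] [Module S M] {ℳ : ℤ → AddSubgroup M}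
  {M' : Type*} [AddCommGroup M'] [Module S M'] {ℳ' : ℤ → AddSubgroup M'}
  {L : ℤ → Submodule (gradeZero 𝒜) M}

lemma gradedHom_ext [Decomposition ℳ] (hL : IsNormalDecomposition ℳ L)
    (hθ : ∀ n ≤ 1, ∀ y ∈ ℳ' n, y ∈ tauKernel t M' → y = 0) {ψ₁ ψ₂ : M →ₗ[S] M'}
    (h₁ : ∀ i, ∀ x ∈ ℳ i, ψ₁ x ∈ ℳ' i) (h₂ : ∀ i, ∀ x ∈ ℳ i, ψ₂ x ∈ ℳ' i)
    (h : ∀ x, (Submodule.Quotient.mk (ψ₁ x) : M' ⧸ tauKernel t M') =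
      Submodule.Quotient.mk (ψ₂ x)) :
    ψ₁ = ψ₂ := by
  have key : ∀ i ≤ 1, ∀ x ∈ L i, ψ₁ x = ψ₂ x := fun i hi x hx =>
    sub_eq_zero.1 (hθ i hi _ (sub_mem (h₁ i x (hL.subset i hx)) (h₂ i x (hL.subset i hx)))
      ((Submodule.Quotient.eq _).1 (h x)))
  refine LinearMap.ext_on hL.span_eq_top ?_
  rintro x (hx | hx)
  exacts [key 0 zero_le_one x hx, key 1 le_rfl x hx]

variable [SetLike.GradedSMul 𝒜 ℳ'] (g : M ⧸ tauKernel t M →ₗ[S] M' ⧸ tauKernel t M')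

lemma exists_linearMap_mk_eq {d : ℤ} (hθ : ∀ y ∈ ℳ' d, y ∈ tauKernel t M' → y = 0)
    {N : Submodule (gradeZero 𝒜) M}
    (hlift : ∀ x ∈ N, ∃ y ∈ ℳ' d, Submodule.Quotient.mk y = g (Submodule.Quotient.mk x)) :
    ∃ f : N →ₗ[gradeZero 𝒜] M', ∀ x, f x ∈ ℳ' d ∧
      Submodule.Quotient.mk (f x) = g (Submodule.Quotient.mk x) := by
  choose f hf using fun x : N => hlift x x.2
  have hunique : ∀ y ∈ ℳ' d, ∀ y' ∈ ℳ' d, (Submodule.Quotient.mk y : M' ⧸ tauKernel t M') =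
      Submodule.Quotient.mk y' → y = y' := fun y hy y' hy' h =>
    sub_eq_zero.1 (hθ _ (sub_mem hy hy') ((Submodule.Quotient.eq _).1 h))
  refine ⟨{ toFun := f, map_add' := fun x x' => ?_, map_smul' := fun a x => ?_ }, hf⟩
  · refine hunique _ (hf _).1 _ (add_mem (hf x).1 (hf x').1) ?_
    simp only [(hf _).2, Submodule.coe_add, Submodule.Quotient.mk_add, map_add]
  · refine hunique _ (hf _).1 _
      (by simpa [Subring.smul_def] using SetLike.smul_mem_graded ℳ' a.2 (hf x).1) ?_
    simp only [(hf _).2, Submodule.coe_smul, Subring.smul_def, Submodule.Quotient.mk_smul,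
      map_smul, RingHom.id_apply]

lemma exists_gradedHom_lift [Decomposition ℳ] [SetLike.GradedSMul 𝒜 ℳ] [Decomposition ℳ']
    [Module.Projective S M] (hL : IsNormalDecomposition ℳ L)
    (hθ : ∀ n ≤ 1, ∀ y ∈ ℳ' n, y ∈ tauKernel t M' → y = 0)
    (hθ₀ : ∀ m : M', ∃ y ∈ ℳ' 0, (Submodule.Quotient.mk y : M' ⧸ tauKernel t M') =
      Submodule.Quotient.mk m)
    (hg : ∀ x ∈ ℳ 1, ∃ y ∈ ℳ' 1, g (Submodule.Quotient.mk x) = Submodule.Quotient.mk y) :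
    ∃ ψ : M →ₗ[S] M', (∀ i, ∀ x ∈ ℳ i, ψ x ∈ ℳ' i) ∧
      ∀ x, Submodule.Quotient.mk (ψ x) = g (Submodule.Quotient.mk x) := by
  obtain ⟨f₀, hf₀⟩ := exists_linearMap_mk_eq g (hθ 0 zero_le_one) (N := L 0) fun x _ => by
    obtain ⟨m, hm⟩ := Submodule.Quotient.mk_surjective _ (g (Submodule.Quotient.mk x))
    obtain ⟨y, hy, hym⟩ := hθ₀ m
    exact ⟨y, hy, hym.trans hm⟩
  obtain ⟨f₁, hf₁⟩ := exists_linearMap_mk_eq g (hθ 1 le_rfl) (N := L 1) fun x hx => by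
    obtain ⟨y, hy, hxy⟩ := hg x (hL.subset 1 hx)
    exact ⟨y, hy, hxy.symm⟩
  obtain ⟨j, hj⟩ := Module.projective_lifting_property _ LinearMap.id hL.coverMap_surjective
  have hΦ : (tauKernel t M').mkQ ∘ₗ coverMap f₀ f₁ =
      (g ∘ₗ (tauKernel t M).mkQ) ∘ₗ coverMap (L 0).subtype (L 1).subtype := by
    rw [comp_coverMap, comp_coverMap]
    congr 1 <;> ext x <;> simp [hf₀, hf₁]
  refine ⟨(coverMap f₀ f₁ ∘ₗ j).gradedPart 𝒜 ℳ ℳ',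
    fun i x hx => LinearMap.gradedPart_mem _ _ _ _ hx, fun x => ?_⟩
  induction x using Decomposition.inductionOn ℳ with
  | zero => simp
  | @homogeneous n x =>
    rw [LinearMap.gradedPart_apply_of_mem _ _ _ _ x.2, LinearMap.comp_apply,
      coe_decompose_coverMap ℳ' (fun y => (hf₀ y).1) (fun y => (hf₁ y).1)]
    have := LinearMap.congr_fun hΦ (coverProj 𝒜 (L 0) (L 1) n (j x))
    simp only [LinearMap.comp_apply, Submodule.mkQ_apply] at this
    rw [this, ← coe_decompose_coverMap ℳ (fun y => hL.subset 0 y.2) (fun y => hL.subset 1 y.2),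
      ← LinearMap.comp_apply _ j, hj, LinearMap.id_apply, decompose_of_mem_same ℳ x.2]
  | add x y hx hy => simp only [map_add, Submodule.Quotient.mk_add, hx, hy]

end FullyFaithful

theorem stmt_19_general (p : ℕ) [Fact p.Prime]
    (R : Type) [CommRing R]
    (S : Type) [CommRing S] (𝒜 : ℤ → AddSubgroup S) [GradedRing 𝒜]
    (W : WittFrameData p R S 𝒜)
    -- M and M', finite projective graded S-modules:
    (M : Type) [AddCommGroup M] [Module S M] (ℳ : ℤ → AddSubgroup M)
    [DirectSum.Decomposition ℳ]
    (hℳsmul : ∀ (i j : ℤ), ∀ s ∈ 𝒜 i, ∀ x ∈ ℳ j, s • x ∈ ℳ (i + j))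
    [Module.Projective S M]
    (M' : Type) [AddCommGroup M'] [Module S M'] (ℳ' : ℤ → AddSubgroup M')
    [DirectSum.Decomposition ℳ']
    (hℳ'smul : ∀ (i j : ℤ), ∀ s ∈ 𝒜 i, ∀ x ∈ ℳ' j, s • x ∈ ℳ' (i + j))
    [Module.Projective S M']
    -- normal decompositions supported in degrees {0, 1} (depth ≥ 0, altitude ≤ 1):
    (L : ℤ → Submodule (gradeZero 𝒜) M)
    (hLsub : ∀ i : ℤ, (L i : Set M) ⊆ (ℳ i : AddSubgroup M))
    (hLsupp : ∀ i : ℤ, i ≠ 0 → i ≠ 1 → L i = ⊥)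
    (hLgen : ∀ n : ℤ, ℳ n =
      AddSubgroup.closure {m : M | ∃ i : ℤ, ∃ s ∈ 𝒜 (n - i), ∃ x ∈ L i, m = s • x})
    (L' : ℤ → Submodule (gradeZero 𝒜) M')
    (hL'sub : ∀ i : ℤ, (L' i : Set M') ⊆ (ℳ' i : AddSubgroup M'))
    (hL'proj : ∀ i : ℤ, Module.Projective (gradeZero 𝒜) (L' i))
    (hL'supp : ∀ i : ℤ, i ≠ 0 → i ≠ 1 → L' i = ⊥)
    (hL'gen : ∀ n : ℤ, ℳ' n =
      AddSubgroup.closure {m : M' | ∃ i : ℤ, ∃ s ∈ 𝒜 (n - i), ∃ x ∈ L' i, m = s • x}) :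
    -- full faithfulness of M ↦ (M^τ, θ₁(M₁)):
    ∀ g : (M ⧸ (Ideal.span ({W.t - 1} : Set S) • (⊤ : Submodule S M))) →ₗ[S]
        (M' ⧸ (Ideal.span ({W.t - 1} : Set S) • (⊤ : Submodule S M'))),
      (∀ x ∈ ℳ 1, ∃ y ∈ ℳ' 1, g (Submodule.Quotient.mk x) = Submodule.Quotient.mk y) →
      ∃! ψ : M →ₗ[S] M',
        (∀ i : ℤ, ∀ x ∈ ℳ i, ψ x ∈ ℳ' i) ∧
        (∀ x : M, (Submodule.Quotient.mk (ψ x) :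
            M' ⧸ (Ideal.span ({W.t - 1} : Set S) • (⊤ : Submodule S M'))) =
          g (Submodule.Quotient.mk x)) := by
  intro g hg
  have : SetLike.GradedSMul 𝒜 ℳ := ⟨fun _ _ _ _ hs hx => hℳsmul _ _ _ hs _ hx⟩
  have : SetLike.GradedSMul 𝒜 ℳ' := ⟨fun _ _ _ _ hs hx => hℳ'smul _ _ _ hs _ hx⟩
  have := hL'proj 0
  have := hL'proj 1
  have hL : IsNormalDecomposition ℳ L := ⟨hLsub, hLsupp, hLgen⟩
  have hL' : IsNormalDecomposition ℳ' L' := ⟨hL'sub, hL'supp, hL'gen⟩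
  have hθ : ∀ n ≤ 1, ∀ y ∈ ℳ' n, y ∈ tauKernel W.t M' → y = 0 := fun n hn y hy =>
    eq_zero_of_mem_tauKernel W.t_mem
      (hL'.eq_zero_of_t_smul_eq_zero W.t_mem W.eq_zero_of_t_mul_eq_zero) hn hy
  have hθ₀ := exists_mem_zero_mk_eq W.t_mem (hL'.exists_t_smul_eq W.exists_t_mul_eq)
  obtain ⟨ψ, hψ, hψg⟩ := exists_gradedHom_lift g hL hθ hθ₀ hg
  exact ⟨ψ, ⟨hψ, hψg⟩, fun ψ' ⟨hψ', hψ'g⟩ =>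
    gradedHom_ext hL hθ hψ' hψ fun x => (hψ'g x).trans (hψg x).symm⟩

/-- Let `R` be a `p`-adic ring and `S = W(R)^⊕` the graded Witt frame
ring.  For finite projective graded `S`-modules `M, M'` of non-negative depth and
altitude at most one (i.e. admitting normal decompositions supported in degrees
`{0,1}`), the functor `M ↦ (M^τ, θ₁(M₁))` — sending `M` to `M^τ = M/(t−1)M` together
with the image of the degree-one part `M₁` — is fully faithful: every `W(R)`-linear
map `M^τ → M'^τ` carrying `θ₁(M₁)` into `θ₁'(M₁')` is induced by a unique graded
homomorphism `M → M'`. -/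
theorem stmt_19 (p : ℕ) [Fact p.Prime]
    (R : Type) [CommRing R] (hR : IsAdicComplete (Ideal.span {(p : R)}) R)
    (S : Type) [CommRing S] (𝒜 : ℤ → AddSubgroup S) [GradedRing 𝒜]
    (W : WittFrameData p R S 𝒜)
    -- M and M', finite projective graded S-modules:
    (M : Type) [AddCommGroup M] [Module S M] (ℳ : ℤ → AddSubgroup M)
    [DirectSum.Decomposition ℳ]
    (hℳsmul : ∀ (i j : ℤ), ∀ s ∈ 𝒜 i, ∀ x ∈ ℳ j, s • x ∈ ℳ (i + j))
    [Module.Finite S M] [Module.Projective S M]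
    (M' : Type) [AddCommGroup M'] [Module S M'] (ℳ' : ℤ → AddSubgroup M')
    [DirectSum.Decomposition ℳ']
    (hℳ'smul : ∀ (i j : ℤ), ∀ s ∈ 𝒜 i, ∀ x ∈ ℳ' j, s • x ∈ ℳ' (i + j))
    [Module.Finite S M'] [Module.Projective S M']
    -- normal decompositions supported in degrees {0, 1} (depth ≥ 0, altitude ≤ 1):
    (L : ℤ → Submodule (gradeZero 𝒜) M)
    (hLsub : ∀ i : ℤ, (L i : Set M) ⊆ (ℳ i : AddSubgroup M))
    (hLfin : ∀ i : ℤ, Module.Finite (gradeZero 𝒜) (L i))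
    (hLproj : ∀ i : ℤ, Module.Projective (gradeZero 𝒜) (L i))
    (hLsupp : ∀ i : ℤ, i ≠ 0 → i ≠ 1 → L i = ⊥)
    (hLgen : ∀ n : ℤ, ℳ n =
      AddSubgroup.closure {m : M | ∃ i : ℤ, ∃ s ∈ 𝒜 (n - i), ∃ x ∈ L i, m = s • x})
    (L' : ℤ → Submodule (gradeZero 𝒜) M')
    (hL'sub : ∀ i : ℤ, (L' i : Set M') ⊆ (ℳ' i : AddSubgroup M'))
    (hL'fin : ∀ i : ℤ, Module.Finite (gradeZero 𝒜) (L' i))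
    (hL'proj : ∀ i : ℤ, Module.Projective (gradeZero 𝒜) (L' i))
    (hL'supp : ∀ i : ℤ, i ≠ 0 → i ≠ 1 → L' i = ⊥)
    (hL'gen : ∀ n : ℤ, ℳ' n =
      AddSubgroup.closure {m : M' | ∃ i : ℤ, ∃ s ∈ 𝒜 (n - i), ∃ x ∈ L' i, m = s • x}) :
    -- full faithfulness of M ↦ (M^τ, θ₁(M₁)):
    ∀ g : (M ⧸ (Ideal.span ({W.t - 1} : Set S) • (⊤ : Submodule S M))) →ₗ[S]
        (M' ⧸ (Ideal.span ({W.t - 1} : Set S) • (⊤ : Submodule S M'))),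
      (∀ x ∈ ℳ 1, ∃ y ∈ ℳ' 1, g (Submodule.Quotient.mk x) = Submodule.Quotient.mk y) →
      ∃! ψ : M →ₗ[S] M',
        (∀ i : ℤ, ∀ x ∈ ℳ i, ψ x ∈ ℳ' i) ∧
        (∀ x : M, (Submodule.Quotient.mk (ψ x) :
            M' ⧸ (Ideal.span ({W.t - 1} : Set S) • (⊤ : Submodule S M'))) =
          g (Submodule.Quotient.mk x)) :=
  stmt_19_general p R S 𝒜 W M ℳ hℳsmul M' ℳ' hℳ'smul L hLsub hLsupp hLgen L' hL'sub hL'proj hL'supp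
    hL'gen
end
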